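/- arXiv:1601.01907 — 9 statements merged into one kernel-verified Lean document; each statement's English description precedes it below -/
import Mathlib

section
/- Let D : ℝ^{d×N} → ℝ^{d×N} be continuous and monotone, i.e. (D(T₁) − D(T₂)) · (T₁ − T₂) ≥ 0 for all T₁, T₂ ∈ ℝ^{d×N}. Then the closure of the range D(ℝ^{d×N}) is a convex subset of ℝ^{d×N}. -/
/-!
Let `y = α • D a + β • D b` be a point of the segment between two values of `D`. For `ε > 0` the
map `D + ε • id - y` is continuous and strongly monotone, hence has a zero `p ε`: Minty's lemma
gives a weak solution of the variational inequality on a large ball, continuity of `D` upgrades it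
to a strong one, and strong monotonicity keeps it inside the ball. Minty's lemma itself is a finite
intersection property of half-spaces, which for finitely many test points is the minimax theorem
for a game with matrix `A i j + A j i ≤ 0`, obtained by separating the image of the simplex from
the nonpositive orthant. Testing monotonicity at `p ε` against `a` and `b` gives
`‖ε • p ε‖ ^ 2 ≤ 2 ε α β ⟪D a - D b, a - b⟫ + ‖ε • (α • a + β • b)‖ ^ 2`, so
`D (p ε) = y - ε • p ε → y` as `ε → 0`.
-/

open MeasureTheory Filter Topology Set

noncomputable section

/-- The space of real `d × N` matrices with the Frobenius (Euclidean) inner product. -/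
abbrev Mat (d N : ℕ) := EuclideanSpace ℝ (Fin d × Fin N)

section Game

open Matrix

theorem Matrix.dotProduct_mulVec_self_nonpos {ι : Type*} [Fintype ι] (A : Matrix ι ι ℝ)
    (hA : ∀ i j, A i j + A j i ≤ 0) {μ : ι → ℝ} (hμ : 0 ≤ μ) : μ ⬝ᵥ A *ᵥ μ ≤ 0 := by
  have htr : μ ⬝ᵥ Aᵀ *ᵥ μ = μ ⬝ᵥ A *ᵥ μ := by
    rw [dotProduct_mulVec, vecMul_transpose, dotProduct_comm]
  have hsum : μ ⬝ᵥ (A + Aᵀ) *ᵥ μ ≤ 0 := by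
    simp only [dotProduct, mulVec, Finset.mul_sum]
    refine Finset.sum_nonpos fun i _ => Finset.sum_nonpos fun j _ => ?_
    have := mul_nonneg (hμ i) (hμ j)
    simp only [add_apply, transpose_apply]
    nlinarith [hA i j]
  rw [add_mulVec, dotProduct_add, htr] at hsum
  linarith

theorem exists_nonpos_mem_of_forall_stdSimplex_dotProduct_nonpos {ι : Type*} [Fintype ι]
    [Nonempty ι] {S : Set (ι → ℝ)} (hSc : Convex ℝ S) (hSk : IsCompact S)
    (h : ∀ μ ∈ stdSimplex ℝ ι, ∃ s ∈ S, μ ⬝ᵥ s ≤ 0) : ∃ s ∈ S, s ≤ 0 := by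
  classical
  by_contra! hS
  obtain ⟨f, u, v, hfS, huv, hfT⟩ := geometric_hahn_banach_compact_closed hSc hSk
    (convex_Iic 0) isClosed_Iic (disjoint_left.2 fun s hs hs0 => hS s hs hs0)
  have hv : v < 0 := by simpa using hfT 0 self_mem_Iic
  -- `f` is bounded below on the cone `Iic 0`, hence nonnegative on it
  have hf_nonneg : ∀ t ≤ 0, 0 ≤ f t := by
    intro t ht
    by_contra! hft
    have := hfT ((v / f t) • t)
      (smul_nonpos_of_nonneg_of_nonpos (div_nonneg_of_nonpos hv.le hft.le) ht)
    rw [map_smul, smul_eq_mul, div_mul_cancel₀ _ hft.ne] at this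
    exact lt_irrefl _ this
  set μ : ι → ℝ := fun i => -f (Pi.single i 1)
  have hμ : 0 ≤ μ := fun i => by
    simpa [μ] using hf_nonneg (-Pi.single i 1) (by simp)
  have hfμ : ∀ s, f s = -(μ ⬝ᵥ s) := by
    intro s
    conv_lhs => rw [pi_eq_sum_univ' s]
    simp [μ, dotProduct, mul_comm]
  obtain ⟨s, hs, hμs⟩ : ∃ s ∈ S, μ ⬝ᵥ s ≤ 0 := by
    rcases (Finset.sum_nonneg fun i _ => hμ i : 0 ≤ ∑ i, μ i).eq_or_lt with hM | hM
    · obtain ⟨s, hs, -⟩ := h _ (single_mem_stdSimplex ℝ (Classical.arbitrary ι))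
      have : μ = 0 := funext fun i =>
        (Finset.sum_eq_zero_iff_of_nonneg fun i _ => hμ i).1 hM.symm i (Finset.mem_univ i)
      exact ⟨s, hs, by simp [this]⟩
    · obtain ⟨s, hs, hμs⟩ := h ((∑ i, μ i)⁻¹ • μ)
        ⟨fun i => mul_nonneg (inv_nonneg.2 hM.le) (hμ i), by simp [← Finset.mul_sum, hM.ne']⟩
      rw [smul_dotProduct, smul_eq_mul] at hμs
      exact ⟨s, hs, nonpos_of_mul_nonpos_right hμs (inv_pos.2 hM)⟩
  linarith [hfS s hs, hfμ s]

theorem Matrix.exists_mem_stdSimplex_mulVec_nonpos {ι : Type*} [Fintype ι] [Nonempty ι]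
    (A : Matrix ι ι ℝ) (hA : ∀ i j, A i j + A j i ≤ 0) :
    ∃ μ ∈ stdSimplex ℝ ι, A *ᵥ μ ≤ 0 := by
  obtain ⟨_, ⟨μ, hμ, rfl⟩, hAμ⟩ := exists_nonpos_mem_of_forall_stdSimplex_dotProduct_nonpos
    ((convex_stdSimplex ℝ ι).linear_image A.mulVecLin)
    ((isCompact_stdSimplex ℝ ι).image A.mulVecLin.continuous_of_finiteDimensional)
    fun μ hμ => ⟨A *ᵥ μ, ⟨μ, hμ, rfl⟩, A.dotProduct_mulVec_self_nonpos hA hμ.1⟩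
  exact ⟨μ, hμ, hAμ⟩

end Game

theorem convex_closure_of_segment_subset_closure {𝕜 E : Type*} [Semiring 𝕜] [PartialOrder 𝕜]
    [AddCommMonoid E] [Module 𝕜 E] [TopologicalSpace E] [ContinuousAdd E]
    [ContinuousConstSMul 𝕜 E] {s : Set E} (h : ∀ x ∈ s, ∀ y ∈ s, segment 𝕜 x y ⊆ closure s) :
    Convex 𝕜 (closure s) := by
  intro x hx y hy a b ha hb hab
  have hf : Continuous (Function.uncurry fun x' y' : E => a • x' + b • y') :=
    (continuous_fst.const_smul a).add (continuous_snd.const_smul b)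
  simpa using map_mem_closure₂ hf hx hy fun x' hx' y' hy' =>
    h x' hx' y' hy' ⟨a, b, ha, hb, hab, rfl⟩

open scoped InnerProductSpace

section Monotone

open Metric

variable {E : Type*} [NormedAddCommGroup E] [InnerProductSpace ℝ E] {D : E → E}

theorem eq_zero_of_forall_inner_sub_nonneg_of_mem_nhds {K : Set E} {p v : E} (hK : K ∈ 𝓝 p)
    (h : ∀ z ∈ K, 0 ≤ ⟪v, z - p⟫_ℝ) : v = 0 := by
  have hlim : Tendsto (fun t : ℝ => p - t • v) (𝓝[>] 0) (𝓝 p) := by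
    have : Continuous fun t : ℝ => p - t • v := by fun_prop
    simpa using (this.tendsto 0).mono_left nhdsWithin_le_nhds
  obtain ⟨t, htK, ht⟩ := ((hlim.eventually_mem hK).and self_mem_nhdsWithin).exists
  have := h _ htK
  rw [sub_sub_cancel_left, inner_neg_right, real_inner_smul_right,
    real_inner_self_eq_norm_sq] at this
  have : ‖v‖ ^ 2 ≤ 0 := by nlinarith [show (0 : ℝ) < t from ht]
  simpa using this

theorem exists_mem_convexHull_forall_inner_sub_nonneg
    (hmon : ∀ a b, 0 ≤ ⟪D a - D b, a - b⟫_ℝ) {ι : Type*} [Fintype ι] [Nonempty ι]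
    (z : ι → E) : ∃ x ∈ convexHull ℝ (range z), ∀ i, 0 ≤ ⟪D (z i), z i - x⟫_ℝ := by
  obtain ⟨μ, ⟨hμ0, hμ1⟩, hAμ⟩ := Matrix.exists_mem_stdSimplex_mulVec_nonpos
    (Matrix.of fun i j => ⟪D (z i), z j - z i⟫_ℝ) fun i j => by
      have := hmon (z i) (z j)
      simp only [Matrix.of_apply, inner_sub_left, inner_sub_right] at this ⊢
      linarith
  refine ⟨∑ j, μ j • z j, (convex_convexHull ℝ _).sum_mem (fun j _ => hμ0 j) hμ1
    fun j _ => subset_convexHull ℝ _ (mem_range_self j), fun i => ?_⟩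
  have hsub : z i - ∑ j, μ j • z j = -∑ j, μ j • (z j - z i) := by
    simp only [smul_sub, Finset.sum_sub_distrib, ← Finset.sum_smul, hμ1, one_smul]
    abel
  have := hAμ i
  simp only [Matrix.mulVec, dotProduct, Matrix.of_apply, Pi.zero_apply] at this
  rw [hsub, inner_neg_right, inner_sum]
  simp only [real_inner_smul_right, mul_comm (μ _)]
  linarith

theorem IsCompact.exists_forall_inner_sub_nonneg (hmon : ∀ a b, 0 ≤ ⟪D a - D b, a - b⟫_ℝ)
    {K : Set E} (hKc : IsCompact K) (hKv : Convex ℝ K) (hKn : K.Nonempty) :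
    ∃ x ∈ K, ∀ z ∈ K, 0 ≤ ⟪D z, z - x⟫_ℝ := by
  obtain ⟨x, hxK, hx⟩ := hKc.inter_iInter_nonempty (fun z : K => {x | 0 ≤ ⟪D z, z - x⟫_ℝ})
    (fun z => isClosed_le continuous_const (continuous_const.inner (continuous_const.sub
      continuous_id))) fun u => by
    rcases u.eq_empty_or_nonempty with rfl | hu
    · simpa using hKn
    have := hu.to_subtype
    obtain ⟨x, hx, hxz⟩ :=
      exists_mem_convexHull_forall_inner_sub_nonneg hmon fun i : u => (i : E)
    exact ⟨x, convexHull_min (range_subset_iff.2 fun i => i.1.2) hKv hx,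
      mem_iInter₂.2 fun z hz => hxz ⟨z, hz⟩⟩
  exact ⟨x, hxK, fun z hz => mem_iInter.1 hx ⟨z, hz⟩⟩

theorem Convex.inner_sub_nonneg_of_forall_inner_sub_nonneg (hD : Continuous D) {K : Set E}
    (hKv : Convex ℝ K) {x : E} (hx : x ∈ K) (h : ∀ z ∈ K, 0 ≤ ⟪D z, z - x⟫_ℝ) {w : E}
    (hw : w ∈ K) : 0 ≤ ⟪D x, w - x⟫_ℝ := by
  have hg : Continuous fun t : ℝ => ⟪D (x + t • (w - x)), w - x⟫_ℝ := by fun_prop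
  have hlim : Tendsto (fun t : ℝ => ⟪D (x + t • (w - x)), w - x⟫_ℝ) (𝓝[>] 0)
      (𝓝 ⟪D x, w - x⟫_ℝ) := by
    simpa using (hg.tendsto 0).mono_left nhdsWithin_le_nhds
  refine ge_of_tendsto hlim ?_
  filter_upwards [Ioc_mem_nhdsGT one_pos] with t ht
  have := h _ (hKv.add_smul_sub_mem hx hw (Ioc_subset_Icc_self ht))
  rw [add_sub_cancel_left, real_inner_smul_right] at this
  exact nonneg_of_mul_nonneg_right this ht.1

theorem exists_eq_zero_of_strongly_monotone [FiniteDimensional ℝ E] {G : E → E}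
    (hG : Continuous G) {c : ℝ} (hc : 0 < c)
    (hmon : ∀ a b, c * ‖a - b‖ ^ 2 ≤ ⟪G a - G b, a - b⟫_ℝ) : ∃ p, G p = 0 := by
  set R := ‖G 0‖ / c + 1
  have hK := convex_closedBall (0 : E) R
  obtain ⟨p, hpK, hp⟩ := (isCompact_closedBall (0 : E) R).exists_forall_inner_sub_nonneg
    (fun a b => (by positivity : 0 ≤ c * ‖a - b‖ ^ 2).trans (hmon a b)) hK
    (nonempty_closedBall.2 (by positivity))
  have hVI z (hz : z ∈ closedBall 0 R) : 0 ≤ ⟪G p, z - p⟫_ℝ :=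
    hK.inner_sub_nonneg_of_forall_inner_sub_nonneg hG hpK hp hz
  have hpR : ‖p‖ < R := by
    have h0 := hVI 0 (mem_closedBall_self (by positivity))
    have h1 := hmon p 0
    rw [zero_sub, inner_neg_right] at h0
    rw [sub_zero, inner_sub_left] at h1
    have hcp : c * ‖p‖ ≤ ‖G 0‖ := by
      rcases (norm_nonneg p).eq_or_lt with hp0 | hp0
      · rw [← hp0, mul_zero]; positivity
      · refine le_of_mul_le_mul_right ?_ hp0
        nlinarith [neg_le_of_abs_le (abs_real_inner_le_norm (G 0) p)]
    have : ‖p‖ ≤ ‖G 0‖ / c := by rw [le_div_iff₀ hc]; linarith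
    linarith
  exact ⟨p, eq_zero_of_forall_inner_sub_nonneg_of_mem_nhds
    (mem_of_superset (isOpen_ball.mem_nhds (mem_ball_zero_iff.2 hpR)) ball_subset_closedBall)
    hVI⟩

theorem exists_add_smul_eq_of_monotone [FiniteDimensional ℝ E] (hD : Continuous D)
    (hmon : ∀ a b, 0 ≤ ⟪D a - D b, a - b⟫_ℝ) {c : ℝ} (hc : 0 < c) (y : E) :
    ∃ p, D p + c • p = y := by
  obtain ⟨p, hp⟩ := exists_eq_zero_of_strongly_monotone (G := fun a => D a + c • a - y)
    (by fun_prop) hc fun a b => by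
      have : D a + c • a - y - (D b + c • b - y) = (D a - D b) + c • (a - b) := by module
      rw [this, inner_add_left, real_inner_smul_left, real_inner_self_eq_norm_sq]
      linarith [hmon a b]
  exact ⟨p, sub_eq_zero.1 hp⟩

theorem norm_smul_sq_le_of_add_smul_eq (hmon : ∀ a b, 0 ≤ ⟪D a - D b, a - b⟫_ℝ)
    {a b p : E} {α β e : ℝ} (hα : 0 ≤ α) (hβ : 0 ≤ β) (hαβ : α + β = 1) (he : 0 ≤ e)
    (hp : D p + e • p = α • D a + β • D b) :
    ‖e • p‖ ^ 2 ≤ 2 * e * (α * β * ⟪D a - D b, a - b⟫_ℝ) + ‖e • (α • a + β • b)‖ ^ 2 := by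
  obtain rfl : α = 1 - β := by linarith
  set m := (1 - β) • a + β • b
  have hDp : D p = (1 - β) • D a + β • D b - e • p := eq_sub_of_add_eq hp
  have hcombo : (1 - β) * ⟪D p - D a, p - a⟫_ℝ + β * ⟪D p - D b, p - b⟫_ℝ
      = (1 - β) * β * ⟪D a - D b, a - b⟫_ℝ - e * ⟪p, p - m⟫_ℝ := by
    rw [hDp, show p - m = (1 - β) • (p - a) + β • (p - b) by module,
      show (1 - β) • D a + β • D b - e • p - D a = β • (D b - D a) - e • p by module,
      show (1 - β) • D a + β • D b - e • p - D b = (1 - β) • (D a - D b) - e • p by module]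
    simp only [inner_sub_left, inner_sub_right, inner_add_right, real_inner_smul_left,
      real_inner_smul_right]
    ring
  have hmono : 0 ≤ (1 - β) * β * ⟪D a - D b, a - b⟫_ℝ - e * ⟪p, p - m⟫_ℝ :=
    hcombo ▸ add_nonneg (mul_nonneg hα (hmon p a)) (mul_nonneg hβ (hmon p b))
  rw [inner_sub_right p, real_inner_self_eq_norm_sq] at hmono
  rw [norm_smul, norm_smul, mul_pow, mul_pow, Real.norm_eq_abs, sq_abs]
  nlinarith [mul_nonneg he hmono, mul_nonneg (sq_nonneg e) (sq_nonneg ‖p - m‖),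
    norm_sub_sq_real p m]

theorem segment_subset_closure_range_of_monotone [FiniteDimensional ℝ E] (hD : Continuous D)
    (hmon : ∀ a b, 0 ≤ ⟪D a - D b, a - b⟫_ℝ) (a b : E) :
    segment ℝ (D a) (D b) ⊆ closure (range D) := by
  rintro y ⟨α, β, hα, hβ, hαβ, rfl⟩
  choose! p hp using fun e (he : 0 < e) => exists_add_smul_eq_of_monotone hD hmon he
    (α • D a + β • D b)
  set C := α * β * ⟪D a - D b, a - b⟫_ℝ
  set m := α • a + β • b
  have hbound : Tendsto (fun e : ℝ => 2 * e * C + ‖e • m‖ ^ 2) (𝓝[>] 0) (𝓝 0) := by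
    have : Continuous fun e : ℝ => 2 * e * C + ‖e • m‖ ^ 2 := by fun_prop
    simpa using (this.tendsto 0).mono_left nhdsWithin_le_nhds
  have hsq : Tendsto (fun e => ‖e • p e‖ ^ 2) (𝓝[>] 0) (𝓝 0) :=
    squeeze_zero' (Eventually.of_forall fun _ => by positivity)
      (eventually_mem_nhdsWithin.mono fun e he =>
        norm_smul_sq_le_of_add_smul_eq hmon hα hβ hαβ he.le (hp e he)) hbound
  have hsmall : Tendsto (fun e => e • p e) (𝓝[>] 0) (𝓝 0) := by
    rw [tendsto_zero_iff_norm_tendsto_zero]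
    simpa using hsq.sqrt
  have hDp : Tendsto (fun e => D (p e)) (𝓝[>] 0) (𝓝 (α • D a + β • D b)) := by
    have : Tendsto (fun e => α • D a + β • D b - e • p e) (𝓝[>] 0) (𝓝 (α • D a + β • D b)) := by
      simpa using tendsto_const_nhds.sub hsmall
    refine this.congr' ?_
    filter_upwards [eventually_mem_nhdsWithin] with e he
    exact (eq_sub_of_add_eq (hp e he)).symm
  exact mem_closure_of_tendsto hDp (Eventually.of_forall fun e => mem_range_self (p e))

end Monotone

theorem convex_closure_range_of_monotone_general (d N : ℕ)
    (D : Mat d N → Mat d N) (hD : Continuous D)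
    (hmon : ∀ T₁ T₂ : Mat d N, (0 : ℝ) ≤ (inner ℝ (D T₁ - D T₂) (T₁ - T₂) : ℝ)) :
    Convex ℝ (closure (Set.range D)) := by
  refine convex_closure_of_segment_subset_closure ?_
  rintro _ ⟨a, rfl⟩ _ ⟨b, rfl⟩
  exact segment_subset_closure_range_of_monotone hD hmon a b

/-- If `D : ℝ^{d×N} → ℝ^{d×N}` is continuous and monotone, i.e.
`(D(T₁) − D(T₂)) · (T₁ − T₂) ≥ 0` for all `T₁, T₂`, then the closure of the range of `D`
is a convex subset of `ℝ^{d×N}`. -/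
theorem convex_closure_range_of_monotone (d N : ℕ) (hd : 1 ≤ d) (hN : 1 ≤ N)
    (D : Mat d N → Mat d N) (hD : Continuous D)
    (hmon : ∀ T₁ T₂ : Mat d N, (0 : ℝ) ≤ (inner ℝ (D T₁ - D T₂) (T₁ - T₂) : ℝ)) :
    Convex ℝ (closure (Set.range D)) :=
  convex_closure_range_of_monotone_general d N D hD hmon
end
end

section
/- Let D : ℝ^{d×N} → ℝ^{d×N} be a C¹ mapping whose derivative tensor A is symmetric and which is uniformly h-monotone, i.e. there is a positive nonincreasing continuous function h : [0,∞) → (0,∞) with h(|T|)|B|² ≤ (B,B)_{A(T)} for all T, B. Then the potential F(T) := ∫₀¹ D(tT)·T dt is a strictly convex function on ℝ^{d×N}. -/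
open MeasureTheory Filter Topology Set

noncomputable section

/-- The potential `F(T) := ∫₀¹ D(tT)·T dt` of a mapping `D : ℝ^{d×N} → ℝ^{d×N}`. -/
noncomputable def pot (d N : ℕ) (D : Mat d N → Mat d N) (T : Mat d N) : ℝ :=
  ∫ t in (0 : ℝ)..1, (inner ℝ (D (t • T)) T : ℝ)

/-! Fix a line `s ↦ x + s • B`. Differentiating under the integral sign, the `s`-derivative of
the integrand `⟪D(t • (x + s • B)), x + s • B⟫` is `⟪D(t • X), B⟫ + ⟪A(t • X)(t • B), X⟫` with
`X = x + s • B`, and by the symmetry of `A` this is the `t`-derivative of `t ⟪D(t • X), B⟫`.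
So `d/ds F(x + s • B) = ⟪D(x + s • B), B⟫`: `D` is the gradient of `F`. The `s`-derivative of
that is `(B,B)_{A(x + s • B)} ≥ h(|x + s • B|) |B|² > 0` for `B ≠ 0`, so `F` is strictly convex
on every line. -/

theorem intervalIntegral.hasDerivAt_integral_of_continuous_deriv
    {G : Type*} [NormedAddCommGroup G] [NormedSpace ℝ G] {F F' : ℝ → ℝ → G} {a b : ℝ}
    (hF : Continuous (Function.uncurry F)) (hF' : Continuous (Function.uncurry F'))
    (hderiv : ∀ s t, HasDerivAt (F · t) (F' s t) s) (s₀ : ℝ) :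
    HasDerivAt (fun s => ∫ t in a..b, F s t) (∫ t in a..b, F' s₀ t) s₀ := by
  obtain ⟨K, hK⟩ := (isCompact_closedBall s₀ 1 |>.prod (isCompact_uIcc (a := a) (b := b))
    ).exists_bound_of_continuousOn hF'.continuousOn
  have hFt (s : ℝ) : Continuous (F s) := hF.comp (Continuous.prodMk_right s)
  have hF't : Continuous (F' s₀) := hF'.comp (Continuous.prodMk_right s₀)
  exact (intervalIntegral.hasDerivAt_integral_of_dominated_loc_of_deriv_le
    (bound := fun _ => K) (Metric.closedBall_mem_nhds s₀ one_pos)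
    (.of_forall fun s => (hFt s).aestronglyMeasurable) ((hFt s₀).intervalIntegrable a b)
    hF't.aestronglyMeasurable (.of_forall fun t ht s hs => hK (s, t) ⟨hs, uIoc_subset_uIcc ht⟩)
    intervalIntegrable_const (.of_forall fun t _ s _ => hderiv s t)).2

theorem strictConvexOn_univ_of_forall_add_smul {V : Type*} [AddCommGroup V] [Module ℝ V]
    {f : V → ℝ} (hf : ∀ x B : V, B ≠ 0 → StrictConvexOn ℝ univ (fun s : ℝ => f (x + s • B))) :
    StrictConvexOn ℝ univ f := by
  refine ⟨convex_univ, fun x _ y _ hxy a b ha hb hab => ?_⟩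
  have h := (hf x (y - x) (sub_ne_zero.2 hxy.symm)).2 (mem_univ 0) (mem_univ 1) zero_ne_one
    ha hb hab
  have hcomb : a • x + b • y = x + (a • 0 + b • 1 : ℝ) • (y - x) := by
    rw [eq_sub_of_add_eq hab]
    module
  simpa [hcomb] using h

theorem hasDerivAt_add_smul {V : Type*} [NormedAddCommGroup V] [NormedSpace ℝ V] (x B : V)
    (s : ℝ) : HasDerivAt (fun s : ℝ => x + s • B) B s := by
  simpa using ((hasDerivAt_id s).smul_const B).const_add x

section Potential

variable {E : Type*} [NormedAddCommGroup E] [InnerProductSpace ℝ E] {D : E → E}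

theorem hasDerivAt_apply_add_smul (hD : Differentiable ℝ D) (x B : E) (s : ℝ) :
    HasDerivAt (fun s : ℝ => D (x + s • B)) (fderiv ℝ D (x + s • B) B) s :=
  (hD _).hasFDerivAt.comp_hasDerivAt s (hasDerivAt_add_smul x B s)

theorem hasDerivAt_mul_inner_apply_smul (hD : Differentiable ℝ D)
    (hsymm : ∀ T B C : E, (inner ℝ (fderiv ℝ D T B) C : ℝ) = inner ℝ (fderiv ℝ D T C) B)
    (x B : E) (t : ℝ) :
    HasDerivAt (fun t : ℝ => t * (inner ℝ (D (t • x)) B : ℝ))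
      (inner ℝ (D (t • x)) B + inner ℝ (fderiv ℝ D (t • x) (t • B)) x) t := by
  have h := (hasDerivAt_id' t).fun_mul
    (by simpa using (hasDerivAt_apply_add_smul hD 0 x t).inner ℝ (hasDerivAt_const t B))
  refine h.congr_deriv ?_
  rw [one_mul, hsymm, map_smul, real_inner_smul_left]

theorem hasDerivAt_potential_add_smul (hD : ContDiff ℝ 1 D)
    (hsymm : ∀ T B C : E, (inner ℝ (fderiv ℝ D T B) C : ℝ) = inner ℝ (fderiv ℝ D T C) B)
    (x B : E) (s₀ : ℝ) :
    HasDerivAt (fun s : ℝ => ∫ t in (0 : ℝ)..1, (inner ℝ (D (t • (x + s • B))) (x + s • B) : ℝ))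
      (inner ℝ (D (x + s₀ • B)) B) s₀ := by
  have hDd : Differentiable ℝ D := hD.differentiable one_ne_zero
  have hDc : Continuous D := hD.continuous
  have hAc : Continuous (fderiv ℝ D) := hD.continuous_fderiv one_ne_zero
  have hderiv (s t : ℝ) : HasDerivAt
      (fun s : ℝ => (inner ℝ (D (t • (x + s • B))) (x + s • B) : ℝ))
      (inner ℝ (D (t • (x + s • B))) B +
        inner ℝ (fderiv ℝ D (t • (x + s • B)) (t • B)) (x + s • B)) s :=
    ((hDd _).hasFDerivAt.comp_hasDerivAt s ((hasDerivAt_add_smul x B s).const_smul t)).inner ℝ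
      (hasDerivAt_add_smul x B s)
  have hint := intervalIntegral.hasDerivAt_integral_of_continuous_deriv (a := 0) (b := 1)
    (by fun_prop) (by fun_prop) hderiv s₀
  have hFTC := intervalIntegral.integral_eq_sub_of_hasDerivAt (a := 0) (b := 1)
    (fun t _ => hasDerivAt_mul_inner_apply_smul hDd hsymm (x + s₀ • B) B t)
    (by apply Continuous.intervalIntegrable; fun_prop)
  rw [hFTC] at hint
  simpa using hint

theorem strictConvexOn_potential (hD : ContDiff ℝ 1 D)
    (hsymm : ∀ T B C : E, (inner ℝ (fderiv ℝ D T B) C : ℝ) = inner ℝ (fderiv ℝ D T C) B)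
    (hposdef : ∀ T B : E, B ≠ 0 → 0 < (inner ℝ (fderiv ℝ D T B) B : ℝ)) :
    StrictConvexOn ℝ univ fun T : E => ∫ t in (0 : ℝ)..1, (inner ℝ (D (t • T)) T : ℝ) := by
  refine strictConvexOn_univ_of_forall_add_smul fun x B hB => ?_
  have hderiv (s : ℝ) := hasDerivAt_potential_add_smul hD hsymm x B s
  refine StrictMono.strictConvexOn_univ_of_deriv
    (continuous_iff_continuousAt.2 fun s => (hderiv s).continuousAt) ?_
  rw [funext fun s => (hderiv s).deriv]
  refine strictMono_of_deriv_pos fun s => ?_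
  rw [((hasDerivAt_apply_add_smul (hD.differentiable one_ne_zero) x B s).inner ℝ
    (hasDerivAt_const s B)).deriv]
  simpa using hposdef (x + s • B) B hB

end Potential

theorem strictConvex_potential_general (d N : ℕ)
    (D : Mat d N → Mat d N) (hD : ContDiff ℝ 1 D)
    (hsymm : ∀ T B C : Mat d N,
      (inner ℝ (fderiv ℝ D T B) C : ℝ) = (inner ℝ (fderiv ℝ D T C) B : ℝ))
    (h : ℝ → ℝ)
    (hpos : ∀ s : ℝ, 0 ≤ s → 0 < h s)
    (hmon : ∀ T B : Mat d N, h ‖T‖ * ‖B‖ ^ 2 ≤ (inner ℝ (fderiv ℝ D T B) B : ℝ)) :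
    StrictConvexOn ℝ Set.univ (pot d N D) :=
  strictConvexOn_potential hD hsymm fun T B hB =>
    (mul_pos (hpos _ (norm_nonneg T)) (pow_pos (norm_pos_iff.2 hB) 2)).trans_le (hmon T B)

/-- If `D : ℝ^{d×N} → ℝ^{d×N}` is `C¹` with symmetric derivative tensor `A` and is
uniformly `h`-monotone (with `h` positive, nonincreasing and continuous on `[0,∞)`),
then the potential `F(T) := ∫₀¹ D(tT)·T dt` is strictly convex on `ℝ^{d×N}`. -/
theorem strictConvex_potential (d N : ℕ) (hd : 1 ≤ d) (hN : 1 ≤ N)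
    (D : Mat d N → Mat d N) (hD : ContDiff ℝ 1 D)
    (hsymm : ∀ T B C : Mat d N,
      (inner ℝ (fderiv ℝ D T B) C : ℝ) = (inner ℝ (fderiv ℝ D T C) B : ℝ))
    (h : ℝ → ℝ)
    (hpos : ∀ s : ℝ, 0 ≤ s → 0 < h s)
    (hanti : AntitoneOn h (Set.Ici 0))
    (hcont : ContinuousOn h (Set.Ici 0))
    (hmon : ∀ T B : Mat d N, h ‖T‖ * ‖B‖ ^ 2 ≤ (inner ℝ (fderiv ℝ D T B) B : ℝ)) :
    StrictConvexOn ℝ Set.univ (pot d N D) :=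
  strictConvex_potential_general d N D hD hsymm h hpos hmon
end
end

section
/- Let D : ℝ^{d×N} → ℝ^{d×N} be C¹ with symmetric derivative tensor A and uniformly h-monotone. Then D is injective, its range D(ℝ^{d×N}) is an open subset of ℝ^{d×N}, and the convex conjugate F* of the potential F(T) := ∫₀¹ D(tT)·T dt is differentiable at every point of D(ℝ^{d×N}) with gradient ∂F*(B)/∂B = D^{-1}(B); equivalently, the gradient of F* at D(T) equals T for every T ∈ ℝ^{d×N}. -/
open MeasureTheory Filter Topology Set

noncomputable section

/-- The convex conjugate `F*(B) = sup_T (B·T − F(T))` as a real number (on the range of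
`D` the supremum is attained, hence finite, so the real-valued `sSup` is the honest
conjugate there). -/
noncomputable def conjR (d N : ℕ) (D : Mat d N → Mat d N) (B : Mat d N) : ℝ :=
  sSup (Set.range fun T : Mat d N => (inner ℝ B T : ℝ) - pot d N D T)

/-!
Positive definiteness of the derivative makes `D` strictly monotone, hence injective, and makes
every `D'(T)` invertible, so by the inverse function theorem `D` is an open map. Symmetry of `D'`
makes `F` a primitive of `D` along every line, and monotonicity of `D` then turns `D T` into a
subgradient of `F` at `T`. Hence the supremum defining `F*(D T)` is attained at `T`, and for
`B = D S` the subgradient inequalities at `S` and `T` squeeze `F*(B) - F*(D T) - ⟪T, B - D T⟫`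
between `0` and `‖B - D T‖ ‖S - T‖`. Since `D` is open at `T`, every `B` near `D T` is such a
`D S` with `S` near `T`, which gives the gradient.
-/

open scoped RealInnerProductSpace

theorem hasDerivAt_intervalIntegral_of_continuous_deriv {E : Type*} [NormedAddCommGroup E]
    [NormedSpace ℝ E] {F F' : ℝ → ℝ → E} {a b s₀ : ℝ}
    (hF : Continuous (Function.uncurry F)) (hF' : Continuous (Function.uncurry F'))
    (hdiff : ∀ s t, HasDerivAt (F · t) (F' s t) s) :
    HasDerivAt (fun s => ∫ t in a..b, F s t) (∫ t in a..b, F' s₀ t) s₀ := by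
  obtain ⟨C, hC⟩ := ((isCompact_closedBall s₀ 1).prod (isCompact_uIcc (a := a) (b := b))
    ).exists_bound_of_continuousOn hF'.continuousOn
  have hcurry : ∀ s, Continuous (F s) := fun s => hF.comp (Continuous.prodMk_right s)
  exact (intervalIntegral.hasDerivAt_integral_of_dominated_loc_of_deriv_le (bound := fun _ => C)
    (Metric.closedBall_mem_nhds s₀ one_pos) (.of_forall fun s => (hcurry s).aestronglyMeasurable)
    ((hcurry s₀).intervalIntegrable a b)
    (hF'.comp (Continuous.prodMk_right s₀)).aestronglyMeasurable
    (.of_forall fun t ht s hs => hC (s, t) ⟨hs, uIoc_subset_uIcc ht⟩)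
    intervalIntegrable_const (.of_forall fun t _ s _ => hdiff s t)).2

variable {E : Type*} [NormedAddCommGroup E] [InnerProductSpace ℝ E] {D : E → E}

section PositiveDefiniteDerivative

variable (hpd : ∀ z v : E, v ≠ 0 → 0 < ⟪fderiv ℝ D z v, v⟫)
include hpd

theorem inner_sub_pos_of_fderiv_pos (hD : Differentiable ℝ D) {x y : E} (hxy : x ≠ y) :
    0 < ⟪D y - D x, y - x⟫ := by
  set g : ℝ → ℝ := fun t => ⟪D (x + t • (y - x)), y - x⟫
  have hg : ∀ t, HasDerivAt g ⟪fderiv ℝ D (x + t • (y - x)) (y - x), y - x⟫ t := fun t => by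
    have hline : HasDerivAt (fun t : ℝ => x + t • (y - x)) (y - x) t := by
      simpa using ((hasDerivAt_id t).smul_const (y - x)).const_add x
    simpa using ((hD _).hasFDerivAt.comp_hasDerivAt t hline).inner ℝ (hasDerivAt_const t (y - x))
  have hmono : StrictMono g :=
    strictMono_of_deriv_pos fun t => (hg t).deriv ▸ hpd _ _ (sub_ne_zero.mpr hxy.symm)
  simpa [g, inner_sub_left] using hmono zero_lt_one

theorem inner_sub_nonneg_of_fderiv_pos (hD : Differentiable ℝ D) (x y : E) :
    0 ≤ ⟪D x - D y, x - y⟫ := by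
  rcases eq_or_ne y x with rfl | hne
  · simp
  · exact (inner_sub_pos_of_fderiv_pos hpd hD hne).le

theorem injective_of_fderiv_pos (hD : Differentiable ℝ D) : Function.Injective D := by
  intro x y hxy
  by_contra hne
  simpa [hxy] using inner_sub_pos_of_fderiv_pos hpd hD hne

theorem isOpenMap_of_fderiv_pos [FiniteDimensional ℝ E] (hD : ContDiff ℝ 1 D) : IsOpenMap D := by
  refine IsOpenMap.of_nhds_le fun z => ?_
  have hinj : Function.Injective (fderiv ℝ D z) := by
    refine (injective_iff_map_eq_zero _).mpr fun v hv => ?_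
    by_contra hne
    simpa [hv] using hpd z v hne
  exact ((hD.hasStrictFDerivAt one_ne_zero).map_nhds_eq_of_surj
    (LinearMap.range_eq_top.mpr (LinearMap.injective_iff_surjective.mp hinj))).ge

end PositiveDefiniteDerivative

section ConvexConjugate

def IsSubgradientMap (F : E → ℝ) (D : E → E) : Prop :=
  ∀ S T, ⟪D T, S - T⟫ ≤ F S - F T

def convexConjugate (F : E → ℝ) (B : E) : ℝ :=
  sSup (Set.range fun T : E => ⟪B, T⟫ - F T)

variable {F : E → ℝ}

theorem IsSubgradientMap.isGreatest (hsub : IsSubgradientMap F D) (T : E) :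
    IsGreatest (Set.range fun S : E => ⟪D T, S⟫ - F S) (⟪D T, T⟫ - F T) := by
  refine ⟨⟨T, rfl⟩, ?_⟩
  rintro _ ⟨S, rfl⟩
  have := hsub S T
  rw [inner_sub_right] at this
  linarith

theorem IsSubgradientMap.convexConjugate_apply (hsub : IsSubgradientMap F D) (T : E) :
    convexConjugate F (D T) = ⟪D T, T⟫ - F T :=
  (hsub.isGreatest T).csSup_eq

theorem IsSubgradientMap.abs_convexConjugate_sub_le (hsub : IsSubgradientMap F D) (S T : E) :
    |convexConjugate F (D S) - convexConjugate F (D T) - ⟪T, D S - D T⟫|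
      ≤ ‖D S - D T‖ * ‖S - T‖ := by
  have hT_le : ⟪D S, T⟫ - F T ≤ convexConjugate F (D S) :=
    le_csSup (hsub.isGreatest S).bddAbove ⟨T, rfl⟩
  have hsub_ST := hsub S T
  have hcs := real_inner_le_norm (D S - D T) (S - T)
  rw [hsub.convexConjugate_apply] at hT_le
  rw [hsub.convexConjugate_apply, hsub.convexConjugate_apply]
  simp only [inner_sub_left, inner_sub_right, real_inner_comm T] at hT_le hsub_ST hcs ⊢
  rw [abs_le]
  constructor <;> linarith [mul_nonneg (norm_nonneg (D S - D T)) (norm_nonneg (S - T))]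

theorem IsSubgradientMap.hasGradientAt_convexConjugate [CompleteSpace E]
    (hsub : IsSubgradientMap F D) {T₀ : E} (hopen : 𝓝 (D T₀) ≤ map D (𝓝 T₀)) :
    HasGradientAt (convexConjugate F) T₀ (D T₀) := by
  rw [hasGradientAt_iff_isLittleO]
  refine (Asymptotics.isLittleO_map.mpr ?_).mono hopen
  have hbound : (fun S => convexConjugate F (D S) - convexConjugate F (D T₀) - ⟪T₀, D S - D T₀⟫)
      =O[𝓝 T₀] fun S => ‖D S - D T₀‖ * ‖S - T₀‖ :=
    .of_bound' (.of_forall fun S => by simpa using hsub.abs_convexConjugate_sub_le S T₀)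
  have hsmall : (fun S => ‖S - T₀‖) =o[𝓝 T₀] fun _ => (1 : ℝ) :=
    (Asymptotics.isLittleO_one_iff ℝ).mpr (tendsto_norm_sub_self T₀)
  simpa [Function.comp_def] using hbound.trans_isLittleO
    (((Asymptotics.isBigO_refl (fun S => ‖D S - D T₀‖) _).mul_isLittleO hsmall).norm_right)

end ConvexConjugate

section Potential

def potential (D : E → E) (T : E) : ℝ :=
  ∫ t in (0 : ℝ)..1, ⟪D (t • T), T⟫

variable (hD : ContDiff ℝ 1 D) (hsymm : ∀ T B C : E, ⟪fderiv ℝ D T B, C⟫ = ⟪fderiv ℝ D T C, B⟫)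
include hD hsymm

theorem hasDerivAt_potential_line (Y Δ : E) (s₀ : ℝ) :
    HasDerivAt (fun s => potential D (Y + s • Δ)) ⟪D (Y + s₀ • Δ), Δ⟫ s₀ := by
  have hD₁ := hD.differentiable one_ne_zero
  set F' : ℝ → ℝ → ℝ := fun s t =>
    ⟪D (t • (Y + s • Δ)), Δ⟫ + ⟪fderiv ℝ D (t • (Y + s • Δ)) (t • Δ), Y + s • Δ⟫
  have hdiff : ∀ s t, HasDerivAt (fun s => ⟪D (t • (Y + s • Δ)), Y + s • Δ⟫) (F' s t) s := by
    intro s t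
    have hline : HasDerivAt (fun s : ℝ => Y + s • Δ) Δ s := by
      simpa using ((hasDerivAt_id s).smul_const Δ).const_add Y
    exact ((hD₁ _).hasFDerivAt.comp_hasDerivAt s (hline.const_smul t)).inner ℝ hline
  have hF'cont : Continuous (Function.uncurry F') := by
    unfold F'
    fun_prop
  refine (hasDerivAt_intervalIntegral_of_continuous_deriv (a := 0) (b := 1) (s₀ := s₀)
    (by unfold Function.uncurry; fun_prop) hF'cont hdiff).congr_deriv ?_
  set X := Y + s₀ • Δ with hX
  -- by symmetry of `D'`, the integrand `F' s₀` is the `t`-derivative of `t * ⟪D (t • X), Δ⟫`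
  have hprimitive : ∀ t, HasDerivAt (fun t : ℝ => t * ⟪D (t • X), Δ⟫) (F' s₀ t) t := by
    intro t
    have hDX : HasDerivAt (fun t : ℝ => D (t • X)) (fderiv ℝ D (t • X) X) t := by
      have := (hD₁ (t • X)).hasFDerivAt.comp_hasDerivAt t ((hasDerivAt_id' t).smul_const X)
      rwa [one_smul] at this
    refine ((hasDerivAt_id' t).fun_mul (hDX.inner ℝ (hasDerivAt_const t Δ))).congr_deriv ?_
    simp only [F', ← hX, map_smul, real_inner_smul_left, hsymm _ Δ X, inner_zero_right]
    ring
  rw [intervalIntegral.integral_eq_sub_of_hasDerivAt (fun t _ => hprimitive t)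
    ((hF'cont.comp (Continuous.prodMk_right s₀)).intervalIntegrable 0 1)]
  simp

theorem isSubgradientMap_potential (hmono : ∀ S T, 0 ≤ ⟪D S - D T, S - T⟫) :
    IsSubgradientMap (potential D) D := by
  intro S T
  have hline := hasDerivAt_potential_line hD hsymm T (S - T)
  have hderiv_ge : ∀ s ∈ interior (Icc (0 : ℝ) 1),
      ⟪D T, S - T⟫ ≤ deriv (fun s => potential D (T + s • (S - T))) s := by
    rw [interior_Icc]
    rintro s ⟨hs, -⟩
    have := hmono (T + s • (S - T)) T
    rw [add_sub_cancel_left, inner_smul_right, inner_sub_left] at this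
    rw [(hline s).deriv]
    exact sub_nonneg.mp (nonneg_of_mul_nonneg_right this hs)
  simpa using (convex_Icc (0 : ℝ) 1).mul_sub_le_image_sub_of_le_deriv
    (fun s _ => (hline s).continuousAt.continuousWithinAt)
    (fun s _ => (hline s).differentiableAt.differentiableWithinAt) hderiv_ge
    0 (by simp) 1 (by simp) zero_le_one

end Potential

theorem conjugate_differentiable_on_range_general (d N : ℕ)
    (D : Mat d N → Mat d N) (hD : ContDiff ℝ 1 D)
    (hsymm : ∀ T B C : Mat d N,
      (inner ℝ (fderiv ℝ D T B) C : ℝ) = (inner ℝ (fderiv ℝ D T C) B : ℝ))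
    (h : ℝ → ℝ)
    (hpos : ∀ s : ℝ, 0 ≤ s → 0 < h s)
    (hmon : ∀ T B : Mat d N, h ‖T‖ * ‖B‖ ^ 2 ≤ (inner ℝ (fderiv ℝ D T B) B : ℝ)) :
    Function.Injective D ∧ IsOpen (Set.range D) ∧
      ∀ T : Mat d N, HasGradientAt (conjR d N D) T (D T) := by
  have hpd : ∀ T B : Mat d N, B ≠ 0 → 0 < ⟪fderiv ℝ D T B, B⟫ := fun T B hB =>
    (mul_pos (hpos _ (norm_nonneg T)) (pow_pos (norm_pos_iff.mpr hB) 2)).trans_le (hmon T B)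
  have hD₁ := hD.differentiable one_ne_zero
  have hopen := isOpenMap_of_fderiv_pos hpd hD
  have hsub : IsSubgradientMap (pot d N D) D :=
    isSubgradientMap_potential hD hsymm (inner_sub_nonneg_of_fderiv_pos hpd hD₁)
  exact ⟨injective_of_fderiv_pos hpd hD₁, hopen.isOpen_range,
    fun T => hsub.hasGradientAt_convexConjugate (hopen.nhds_le T)⟩

/-- Let `D : ℝ^{d×N} → ℝ^{d×N}` be `C¹` with symmetric derivative tensor and uniformly
`h`-monotone. Then `D` is injective, its range is open, and the convex conjugate `F*` of
the potential `F(T) := ∫₀¹ D(tT)·T dt` is differentiable at every point of the range of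
`D`, with gradient `∂F*/∂B = D⁻¹(B)`; equivalently the gradient of `F*` at `D(T)` is `T`. -/
theorem conjugate_differentiable_on_range (d N : ℕ) (hd : 1 ≤ d) (hN : 1 ≤ N)
    (D : Mat d N → Mat d N) (hD : ContDiff ℝ 1 D)
    (hsymm : ∀ T B C : Mat d N,
      (inner ℝ (fderiv ℝ D T B) C : ℝ) = (inner ℝ (fderiv ℝ D T C) B : ℝ))
    (h : ℝ → ℝ)
    (hpos : ∀ s : ℝ, 0 ≤ s → 0 < h s)
    (hanti : AntitoneOn h (Set.Ici 0))
    (hcont : ContinuousOn h (Set.Ici 0))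
    (hmon : ∀ T B : Mat d N, h ‖T‖ * ‖B‖ ^ 2 ≤ (inner ℝ (fderiv ℝ D T B) B : ℝ)) :
    Function.Injective D ∧ IsOpen (Set.range D) ∧
      ∀ T : Mat d N, HasGradientAt (conjR d N D) T (D T) :=
  conjugate_differentiable_on_range_general d N D hD hsymm h hpos hmon
end
end

section
/- Let D : ℝ^{d×N} → ℝ^{d×N} be C¹ with |D(T)| ≤ C₂ for all T, and uniformly h-monotone with a positive nonincreasing continuous function h : [0,∞) → (0,∞), i.e. h(|T|)|B|² ≤ (B,B)_{A(T)} for all T, B. Then ∫₀^∞ h(s) ds ≤ 2 C₂. -/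
/-!
Along a ray `t ↦ t • B` with `‖B‖ = 1`, the function `g t = ⟪D (t • B), B⟫` is bounded by `C₂`
and, by `h`-monotonicity, has derivative `⟪A(t • B) B, B⟫ ≥ h ‖t • B‖ = h t` for `t ≥ 0`.
Hence `∫₀ᵇ h ≤ g b - g 0 ≤ 2 C₂` for every `b ≥ 0`, and monotone convergence gives the bound
on `(0, ∞)`.
-/

open MeasureTheory Filter Topology Set

noncomputable section

theorem hasDerivAt_inner_comp_smul {E F : Type*} [NormedAddCommGroup E] [NormedSpace ℝ E]
    [NormedAddCommGroup F] [InnerProductSpace ℝ F] {D : E → F} {v : E} {t : ℝ} (w : F)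
    (hD : DifferentiableAt ℝ D (t • v)) :
    HasDerivAt (fun s : ℝ => (inner ℝ (D (s • v)) w : ℝ)) (inner ℝ (fderiv ℝ D (t • v) v) w) t := by
  have hray : HasDerivAt (fun s : ℝ => s • v) v t := by
    simpa using (hasDerivAt_id t).smul_const v
  simpa using (hD.hasFDerivAt.comp_hasDerivAt t hray).inner ℝ (hasDerivAt_const t w)

theorem intervalIntegral_le_two_mul_of_le_deriv {g g' φ : ℝ → ℝ} {a b C : ℝ} (hab : a ≤ b)
    (hg : ∀ t, |g t| ≤ C) (hderiv : ∀ t, HasDerivAt g (g' t) t)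
    (hφ : IntegrableOn φ (Icc a b)) (hle : ∀ t ∈ Ioo a b, φ t ≤ g' t) :
    ∫ t in a..b, φ t ≤ 2 * C :=
  calc ∫ t in a..b, φ t ≤ g b - g a :=
        intervalIntegral.integral_le_sub_of_hasDeriv_right_of_le hab
          (fun t _ => (hderiv t).continuousAt.continuousWithinAt)
          (fun t _ => (hderiv t).hasDerivWithinAt) hφ hle
    _ ≤ 2 * C := by linarith [(abs_le.mp (hg b)).2, (abs_le.mp (hg a)).1]

theorem lintegral_Ioi_ofReal_le_of_intervalIntegral_le {f : ℝ → ℝ} {a M : ℝ}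
    (hf : ∀ x ∈ Ioi a, 0 ≤ f x) (hfi : ∀ b, IntegrableOn f (Ioc a b))
    (hM : ∀ b, a ≤ b → ∫ x in a..b, f x ≤ M) :
    ∫⁻ x in Ioi a, ENNReal.ofReal (f x) ≤ ENNReal.ofReal M := by
  have hcover : Ioi a ⊆ ⋃ n : ℕ, Ioc a (a + n) := fun x hx =>
    mem_iUnion.mpr ⟨⌈x - a⌉₊, hx, by linarith [Nat.le_ceil (x - a)]⟩
  have hdir : Directed (· ⊆ ·) fun n : ℕ => Ioc a (a + n) :=
    Monotone.directed_le fun m n hmn => Ioc_subset_Ioc_right (by gcongr)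
  calc ∫⁻ x in Ioi a, ENNReal.ofReal (f x)
      ≤ ∫⁻ x in ⋃ n : ℕ, Ioc a (a + n), ENNReal.ofReal (f x) := lintegral_mono_set hcover
    _ = ⨆ n : ℕ, ∫⁻ x in Ioc a (a + n), ENNReal.ofReal (f x) :=
        setLIntegral_iUnion_of_directed _ hdir
    _ ≤ ENNReal.ofReal M := by
        refine iSup_le fun n => ?_
        have hn : a ≤ a + n := le_add_of_nonneg_right n.cast_nonneg
        have hf_ae : 0 ≤ᵐ[volume.restrict (Ioc a (a + n))] f :=
          (ae_restrict_iff' measurableSet_Ioc).mpr (ae_of_all _ fun x hx => hf x hx.1)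
        rw [← ofReal_integral_eq_lintegral_ofReal (hfi _) hf_ae,
          ← intervalIntegral.integral_of_le hn]
        exact ENNReal.ofReal_le_ofReal (hM _ hn)

theorem integral_h_le_general (d N : ℕ) (hd : 1 ≤ d) (hN : 1 ≤ N)
    (D : Mat d N → Mat d N) (hD : ContDiff ℝ 1 D)
    (C₂ : ℝ) (hbdd : ∀ T : Mat d N, ‖D T‖ ≤ C₂)
    (h : ℝ → ℝ)
    (hpos : ∀ s : ℝ, 0 ≤ s → 0 < h s)
    (hcont : ContinuousOn h (Set.Ici 0))
    (hmon : ∀ T B : Mat d N, h ‖T‖ * ‖B‖ ^ 2 ≤ (inner ℝ (fderiv ℝ D T B) B : ℝ)) :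
    ∫⁻ s in Set.Ioi (0 : ℝ), ENNReal.ofReal (h s) ≤ ENNReal.ofReal (2 * C₂) := by
  have : Nonempty (Fin d × Fin N) := ⟨(⟨0, hd⟩, ⟨0, hN⟩)⟩
  obtain ⟨B, hB⟩ := exists_norm_eq (Mat d N) zero_le_one
  have hg_bdd (t : ℝ) : |(inner ℝ (D (t • B)) B : ℝ)| ≤ C₂ :=
    (abs_real_inner_le_norm _ _).trans (by rw [hB, mul_one]; exact hbdd _)
  have hh_le (t : ℝ) (ht : 0 ≤ t) : h t ≤ inner ℝ (fderiv ℝ D (t • B) B) B := by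
    simpa [hB, norm_smul, abs_of_nonneg ht] using hmon (t • B) B
  have hh_int (b : ℝ) : IntegrableOn h (Icc 0 b) :=
    (hcont.mono fun _ hx => hx.1).integrableOn_Icc
  refine lintegral_Ioi_ofReal_le_of_intervalIntegral_le (fun s hs => (hpos s hs.le).le)
    (fun b => (hh_int b).mono_set Ioc_subset_Icc_self) fun b hb =>
    intervalIntegral_le_two_mul_of_le_deriv hb hg_bdd
      (fun t => hasDerivAt_inner_comp_smul B (hD.differentiable one_ne_zero _)) (hh_int b)
      fun t ht => hh_le t ht.1.le

/-- If `D : ℝ^{d×N} → ℝ^{d×N}` is `C¹` with `|D(T)| ≤ C₂` and uniformly `h`-monotone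
(with `h` positive, nonincreasing and continuous on `[0,∞)`), then `∫₀^∞ h(s) ds ≤ 2C₂`. -/
theorem integral_h_le (d N : ℕ) (hd : 1 ≤ d) (hN : 1 ≤ N)
    (D : Mat d N → Mat d N) (hD : ContDiff ℝ 1 D)
    (C₂ : ℝ) (hC₂ : 0 < C₂) (hbdd : ∀ T : Mat d N, ‖D T‖ ≤ C₂)
    (h : ℝ → ℝ)
    (hpos : ∀ s : ℝ, 0 ≤ s → 0 < h s)
    (hanti : AntitoneOn h (Set.Ici 0))
    (hcont : ContinuousOn h (Set.Ici 0))
    (hmon : ∀ T B : Mat d N, h ‖T‖ * ‖B‖ ^ 2 ≤ (inner ℝ (fderiv ℝ D T B) B : ℝ)) :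
    ∫⁻ s in Set.Ioi (0 : ℝ), ENNReal.ofReal (h s) ≤ ENNReal.ofReal (2 * C₂) :=
  integral_h_le_general d N hd hN D hD C₂ hbdd h hpos hcont hmon
end
end

section
/- Fix a > 0 and define D : ℝ^{d×N} → ℝ^{d×N} by D(T) = T / (1 + |T|^a)^{1/a}. Then D is C¹ and for all T, B ∈ ℝ^{d×N} one has h(|T|)|B|² ≤ (B,B)_{A(T)} ≤ C₂ |B|² / (1 + |T|), where h(s) = (1 + s^a)^{−1−1/a} and C₂ = max{1, 2^{1−1/a}}, and A(T) is the derivative tensor of D at T. -/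
open MeasureTheory Filter Topology Set

noncomputable section

/-- The prototypical nonlinearity `D(T) = T / (1 + |T|^a)^{1/a}`. -/
noncomputable def protoD (d N : ℕ) (a : ℝ) (T : Mat d N) : Mat d N :=
  ((1 + ‖T‖ ^ a) ^ (1 / a))⁻¹ • T

/-!
Write `D(T) = ψ(|T|) T` with `ψ(s) = (1 + s^a)^{-1/a}` (`protoCoeff`). Away from the origin
`ψ'(s) = -h(s) s^{a-1}` (`h` is `protoH`), so `A(T) = ψ(|T|) I - h(|T|) w ⊗ w` (`protoA`) with
`w = |T|^{a/2-1} T` (`normRpowSMul (a / 2)`). At `T = 0` this formula gives `I`, which is the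
derivative there since `ψ` is continuous with `ψ(0) = 1`, and it is continuous everywhere because
`|w| = |T|^{a/2}`. As `ψ = h · (1 + s^a)` and `(w·B)² ≤ |T|^a |B|²`, the form
`(B,B)_{A(T)} = ψ |B|² - h (w·B)²` is at least `h |B|²`; it is at most `ψ |B|²`, and
`(1 + s) ψ(s) ≤ C₂` compares the `ℓ¹` and `ℓ^a` norms of `(1, s)`.
-/

theorem add_le_max_mul_rpow_add_rpow {a x y : ℝ} (ha : 0 < a) (hx : 0 ≤ x) (hy : 0 ≤ y) :
    x + y ≤ max 1 (2 ^ (1 - 1 / a)) * (x ^ a + y ^ a) ^ (1 / a) := by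
  have hroot : x + y = ((x + y) ^ a) ^ (1 / a) := by
    rw [← Real.rpow_mul (add_nonneg hx hy), mul_one_div_cancel ha.ne', Real.rpow_one]
  rcases le_total a 1 with ha1 | ha1
  · calc x + y = ((x + y) ^ a) ^ (1 / a) := hroot
      _ ≤ (x ^ a + y ^ a) ^ (1 / a) := by
        gcongr
        exact Real.rpow_add_le_add_rpow hx hy ha.le ha1
      _ ≤ max 1 (2 ^ (1 - 1 / a)) * (x ^ a + y ^ a) ^ (1 / a) :=
        le_mul_of_one_le_left (by positivity) (le_max_left _ _)
  · have hconv : (x + y) ^ a ≤ 2 ^ (a - 1) * (x ^ a + y ^ a) := by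
      lift x to NNReal using hx
      lift y to NNReal using hy
      exact_mod_cast NNReal.rpow_add_le_mul_rpow_add_rpow x y ha1
    calc x + y = ((x + y) ^ a) ^ (1 / a) := hroot
      _ ≤ (2 ^ (a - 1) * (x ^ a + y ^ a)) ^ (1 / a) := by gcongr
      _ = 2 ^ (1 - 1 / a) * (x ^ a + y ^ a) ^ (1 / a) := by
        rw [Real.mul_rpow (by positivity) (by positivity), ← Real.rpow_mul zero_le_two]
        congr 2
        field_simp
      _ ≤ max 1 (2 ^ (1 - 1 / a)) * (x ^ a + y ^ a) ^ (1 / a) := by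
        gcongr
        exact le_max_right _ _

section Scalar

def protoCoeff (a s : ℝ) : ℝ := (1 + s ^ a) ^ (-(1 / a))

def protoH (a s : ℝ) : ℝ := (1 + s ^ a) ^ (-(1 + 1 / a))

variable {a s : ℝ}

theorem protoH_nonneg (hs : 0 ≤ s) : 0 ≤ protoH a s := by
  unfold protoH
  positivity

theorem protoCoeff_eq_protoH_mul (hs : 0 ≤ s) : protoCoeff a s = protoH a s * (1 + s ^ a) := by
  rw [protoCoeff, protoH, ← Real.rpow_add_one (by positivity)]
  ring_nf

theorem protoCoeff_zero (ha : a ≠ 0) : protoCoeff a 0 = 1 := by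
  simp [protoCoeff, Real.zero_rpow ha]

theorem hasDerivAt_protoCoeff (ha : 0 < a) (hs : 0 < s) :
    HasDerivAt (protoCoeff a) (-(protoH a s * s ^ (a - 1))) s := by
  have hbase : HasDerivAt (fun t : ℝ => 1 + t ^ a) (a * s ^ (a - 1)) s :=
    (Real.hasDerivAt_rpow_const (Or.inl hs.ne')).const_add 1
  refine (hbase.rpow_const (p := -(1 / a)) (Or.inl (by positivity))).congr_deriv ?_
  rw [protoH, show -(1 / a) - 1 = -(1 + 1 / a) by ring]
  field_simp

theorem protoCoeff_le (ha : 0 < a) (hs : 0 ≤ s) :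
    protoCoeff a s ≤ max 1 (2 ^ (1 - 1 / a)) / (1 + s) := by
  have h := add_le_max_mul_rpow_add_rpow ha zero_le_one hs
  rw [Real.one_rpow] at h
  rw [protoCoeff, Real.rpow_neg (by positivity), le_div_iff₀ (by positivity),
    inv_mul_le_iff₀ (by positivity), mul_comm]
  exact h

end Scalar

theorem continuous_one_add_norm_rpow_rpow {F : Type*} [SeminormedAddCommGroup F] {a : ℝ}
    (ha : 0 ≤ a) (p : ℝ) :
    Continuous fun x : F => (1 + ‖x‖ ^ a) ^ p := by
  have hpos (x : F) : 1 + ‖x‖ ^ a ≠ 0 := by positivity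
  exact (continuous_const.add (continuous_norm.rpow_const fun _ => Or.inr ha)).rpow_const
    fun x => Or.inl (hpos x)

section NormedSpace

variable {F : Type*} [NormedAddCommGroup F] [NormedSpace ℝ F] {r : ℝ}

theorem hasFDerivAt_smul_self_zero {φ : F → ℝ} (hφ : ContinuousAt φ 0) :
    HasFDerivAt (fun x => φ x • x) (φ 0 • ContinuousLinearMap.id ℝ F) 0 := by
  rw [hasFDerivAt_iff_isLittleO_nhds_zero]
  have h : (fun x => φ x - φ 0) =o[𝓝 0] (fun _ => (1 : ℝ)) :=
    (Asymptotics.isLittleO_one_iff ℝ).mpr (tendsto_sub_nhds_zero_iff.mpr hφ)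
  simpa [sub_smul] using h.smul_isBigO (Asymptotics.isBigO_refl (fun x : F => x) (𝓝 0))

def normRpowSMul (r : ℝ) (x : F) : F := ‖x‖ ^ (r - 1) • x

theorem norm_normRpowSMul (hr : 0 < r) (x : F) : ‖normRpowSMul r x‖ = ‖x‖ ^ r := by
  rcases eq_or_ne x 0 with rfl | hx
  · simp [normRpowSMul, Real.zero_rpow hr.ne']
  · rw [normRpowSMul, norm_smul, Real.norm_of_nonneg (by positivity),
      Real.rpow_sub_one (norm_ne_zero_iff.mpr hx)]
    field_simp

theorem continuous_normRpowSMul (hr : 0 < r) : Continuous (normRpowSMul (F := F) r) := by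
  rw [continuous_iff_continuousAt]
  intro x
  rcases eq_or_ne x 0 with rfl | hx
  · have h : Tendsto (fun y : F => ‖y‖ ^ r) (𝓝 0) (𝓝 0) := by
      simpa [Real.zero_rpow hr.ne'] using
        (continuous_norm.rpow_const fun _ => Or.inr hr.le).tendsto (0 : F)
    have h0 : normRpowSMul r (0 : F) = 0 := smul_zero _
    rw [ContinuousAt, h0, tendsto_zero_iff_norm_tendsto_zero]
    simpa only [norm_normRpowSMul hr] using h
  · exact (continuous_norm.continuousAt.rpow_const (Or.inl (norm_ne_zero_iff.mpr hx))).smul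
      continuousAt_id

end NormedSpace

section InnerProductSpace

open InnerProductSpace

variable {E : Type*} [NormedAddCommGroup E] [InnerProductSpace ℝ E] {a : ℝ}

theorem hasFDerivAt_norm_of_ne_zero {x : E} (hx : x ≠ 0) :
    HasFDerivAt (‖·‖) (‖x‖⁻¹ • innerSL ℝ x) x := by
  have h := (Real.hasDerivAt_sqrt (by positivity : ‖x‖ ^ 2 ≠ 0)).comp_hasFDerivAt x
    (hasStrictFDerivAt_norm_sq x).hasFDerivAt
  have hnorm : (fun y : E => ‖y‖) = fun y => √(‖y‖ ^ 2) :=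
    funext fun y => (Real.sqrt_sq (norm_nonneg y)).symm
  rw [hnorm]
  refine h.congr_fderiv ?_
  rw [Real.sqrt_sq (norm_nonneg _)]
  module

def protoA (a : ℝ) (x : E) : E →L[ℝ] E :=
  protoCoeff a ‖x‖ • ContinuousLinearMap.id ℝ E -
    protoH a ‖x‖ • rankOne ℝ (normRpowSMul (a / 2) x) (normRpowSMul (a / 2) x)

theorem hasFDerivAt_protoCoeff_smul (ha : 0 < a) (x : E) :
    HasFDerivAt (fun y : E => protoCoeff a ‖y‖ • y) (protoA a x) x := by
  rcases eq_or_ne x 0 with rfl | hx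
  · refine (hasFDerivAt_smul_self_zero (φ := fun y : E => protoCoeff a ‖y‖)
      (continuous_one_add_norm_rpow_rpow ha.le _).continuousAt).congr_fderiv ?_
    simp [protoA, normRpowSMul, protoCoeff_zero ha.ne']
  · have hs : 0 < ‖x‖ := norm_pos_iff.mpr hx
    have hψ := (hasDerivAt_protoCoeff ha hs).comp_hasFDerivAt x (hasFDerivAt_norm_of_ne_zero hx)
    refine (hψ.smul (hasFDerivAt_id x)).congr_fderiv ?_
    have hpow : ‖x‖ ^ (a / 2 - 1) * ‖x‖ ^ (a / 2 - 1) = ‖x‖ ^ (a - 1) * ‖x‖⁻¹ := by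
      rw [← Real.rpow_add hs, ← Real.rpow_neg_one, ← Real.rpow_add hs]
      ring_nf
    ext y
    simp only [protoA, normRpowSMul, add_apply, sub_apply, smul_apply,
      ContinuousLinearMap.smulRight_apply, rankOne_apply, innerSL_apply_apply,
      real_inner_smul_left, ContinuousLinearMap.coe_id', id_eq, smul_eq_mul, smul_smul,
      Function.comp_apply]
    rw [show ‖x‖ ^ (a / 2 - 1) * inner ℝ x y * ‖x‖ ^ (a / 2 - 1) =
      ‖x‖ ^ (a - 1) * ‖x‖⁻¹ * inner ℝ x y by rw [← hpow]; ring]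
    module

theorem continuous_protoA (ha : 0 < a) : Continuous (protoA (E := E) a) := by
  have hw := continuous_normRpowSMul (F := E) (half_pos ha)
  exact ((continuous_one_add_norm_rpow_rpow ha.le _).smul continuous_const).sub
    ((continuous_one_add_norm_rpow_rpow ha.le _).smul
      (((rankOne ℝ).continuous.comp hw).clm_apply hw))

theorem inner_protoA_apply_self (x y : E) :
    inner ℝ (protoA a x y) y =
      protoCoeff a ‖x‖ * ‖y‖ ^ 2 - protoH a ‖x‖ * inner ℝ (normRpowSMul (a / 2) x) y ^ 2 := by
  simp only [protoA, sub_apply, smul_apply, rankOne_apply, ContinuousLinearMap.coe_id', id_eq,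
    inner_sub_left, real_inner_smul_left, real_inner_self_eq_norm_sq]
  ring

theorem protoH_mul_norm_sq_le_inner_protoA (ha : 0 < a) (x y : E) :
    protoH a ‖x‖ * ‖y‖ ^ 2 ≤ inner ℝ (protoA a x y) y := by
  have hcs : inner ℝ (normRpowSMul (a / 2) x) y ^ 2 ≤ ‖x‖ ^ a * ‖y‖ ^ 2 := by
    have hw : ‖normRpowSMul (a / 2) x‖ ^ 2 = ‖x‖ ^ a := by
      rw [norm_normRpowSMul (half_pos ha), ← Real.rpow_mul_natCast (norm_nonneg x)]
      ring_nf
    rw [← hw, ← mul_pow]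
    exact sq_le_sq' (neg_le_of_abs_le (abs_real_inner_le_norm _ _)) (real_inner_le_norm _ _)
  rw [inner_protoA_apply_self, protoCoeff_eq_protoH_mul (norm_nonneg x)]
  nlinarith [protoH_nonneg (a := a) (norm_nonneg x)]

theorem inner_protoA_le (ha : 0 < a) (x y : E) :
    inner ℝ (protoA a x y) y ≤ max 1 (2 ^ (1 - 1 / a)) * ‖y‖ ^ 2 / (1 + ‖x‖) := by
  have hh := mul_nonneg (protoH_nonneg (a := a) (norm_nonneg x))
    (sq_nonneg (inner ℝ (normRpowSMul (a / 2) x) y))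
  have hψ := mul_le_mul_of_nonneg_right (protoCoeff_le ha (norm_nonneg x)) (sq_nonneg ‖y‖)
  rw [inner_protoA_apply_self, mul_div_right_comm]
  linarith

end InnerProductSpace

theorem protoD_eq (d N : ℕ) (a : ℝ) : protoD d N a = fun T => protoCoeff a ‖T‖ • T := by
  funext T
  rw [protoD, protoCoeff, Real.rpow_neg (by positivity)]

theorem protoD_h_monotone_general (d N : ℕ) (a : ℝ) (ha : 0 < a) :
    ContDiff ℝ 1 (protoD d N a) ∧
      ∀ T B : Mat d N,
        (1 + ‖T‖ ^ a) ^ (-(1 + 1 / a)) * ‖B‖ ^ 2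
            ≤ (inner ℝ (fderiv ℝ (protoD d N a) T B) B : ℝ) ∧
          (inner ℝ (fderiv ℝ (protoD d N a) T B) B : ℝ)
            ≤ max 1 (2 ^ (1 - 1 / a)) * ‖B‖ ^ 2 / (1 + ‖T‖) := by
  have hderiv (T : Mat d N) : HasFDerivAt (protoD d N a) (protoA a T) T := by
    rw [protoD_eq]
    exact hasFDerivAt_protoCoeff_smul ha T
  have hfderiv : fderiv ℝ (protoD d N a) = protoA a := funext fun T => (hderiv T).fderiv
  refine ⟨contDiff_one_iff_fderiv.mpr ⟨fun T => (hderiv T).differentiableAt, ?_⟩, fun T B => ?_⟩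
  · rw [hfderiv]
    exact continuous_protoA ha
  · rw [hfderiv]
    exact ⟨protoH_mul_norm_sq_le_inner_protoA ha T B, inner_protoA_le ha T B⟩

/-- For `a > 0`, the mapping `D(T) = T / (1 + |T|^a)^{1/a}` is `C¹` and satisfies
`h(|T|)|B|² ≤ (B,B)_{A(T)} ≤ C₂|B|²/(1+|T|)` with `h(s) = (1+s^a)^{−1−1/a}` and
`C₂ = max{1, 2^{1−1/a}}`, where `A(T)` is the derivative of `D` at `T`. -/
theorem protoD_h_monotone (d N : ℕ) (hd : 1 ≤ d) (hN : 1 ≤ N) (a : ℝ) (ha : 0 < a) :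
    ContDiff ℝ 1 (protoD d N a) ∧
      ∀ T B : Mat d N,
        (1 + ‖T‖ ^ a) ^ (-(1 + 1 / a)) * ‖B‖ ^ 2
            ≤ (inner ℝ (fderiv ℝ (protoD d N a) T B) B : ℝ) ∧
          (inner ℝ (fderiv ℝ (protoD d N a) T B) B : ℝ)
            ≤ max 1 (2 ^ (1 - 1 / a)) * ‖B‖ ^ 2 / (1 + ‖T‖) :=
  protoD_h_monotone_general d N a ha
end
end

section
/- Let D : ℝ^{d×N} → ℝ^{d×N} be C¹ with |D(T)| ≤ C₂ for all T, and uniformly h-monotone with a positive nonincreasing continuous function h : [0,∞) → (0,∞), i.e. h(|T|)|B|² ≤ (B,B)_{A(T)} for all T, B. Suppose G ∈ ℝ^{d×N} satisfies G = D(T₀) for some T₀ with |T₀| ≤ C. Then liminf_{n→∞} inf_{T ∈ ℝ^{d×N}, |T|=1} (D(nT) − G) · T ≥ h(C+1) > 0. -/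
open MeasureTheory Filter Topology Set

noncomputable section
/-!
Write `K = h (C + 1)`. For a unit vector `T` and `t ≥ C + 1` put `V = t • T - T₀`, so `‖V‖ ≥ 1`.
Along the segment `s ↦ T₀ + s • V` the function `s ↦ ⟪D (T₀ + s • V), V⟫` has derivative
`⟪A V, V⟫ ≥ 0`, and on the initial piece `s ≤ ‖V‖⁻¹` the segment stays in the ball of radius
`C + 1`, where the derivative is at least `K ‖V‖²`. Hence `⟪D (t • T) - D T₀, V⟫ ≥ K ‖V‖`,
and since `D` is bounded the remaining term `⟪D (t • T) - D T₀, T₀⟫` is `O(1)`; dividing by `t`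
gives `⟪D (t • T) - D T₀, T⟫ ≥ K - O(1 / t)` uniformly on the unit sphere.
-/

open scoped RealInnerProductSpace

section

variable {E : Type*} [NormedAddCommGroup E] [InnerProductSpace ℝ E]

/-- The paper's uniform `h`-monotonicity: `h(|T|) |B|² ≤ (B, B)_{A(T)}`. -/
def UniformlyMonotoneWith (h : ℝ → ℝ) (D : E → E) : Prop :=
  ∀ T B : E, h ‖T‖ * ‖B‖ ^ 2 ≤ ⟪fderiv ℝ D T B, B⟫

theorem hasDerivAt_inner_apply_add_smul {D : E → E} (hD : Differentiable ℝ D) (T₀ V : E) (s : ℝ) :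
    HasDerivAt (fun s : ℝ => ⟪D (T₀ + s • V), V⟫) ⟪fderiv ℝ D (T₀ + s • V) V, V⟫ s := by
  have hline : HasDerivAt (fun s : ℝ => T₀ + s • V) V s := by
    simpa using ((hasDerivAt_id s).smul_const V).const_add T₀
  simpa using ((hD _).hasFDerivAt.comp_hasDerivAt s hline).inner ℝ (hasDerivAt_const s V)

theorem mul_norm_le_inner_sub_of_uniformlyMonotoneWith {D : E → E} (hD : Differentiable ℝ D)
    {h : ℝ → ℝ} (hpos : ∀ s : ℝ, 0 ≤ s → 0 < h s) (hanti : AntitoneOn h (Ici 0))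
    (hmon : UniformlyMonotoneWith h D) {C : ℝ} {T₀ V : E} (hT₀ : ‖T₀‖ ≤ C) (hV : 1 ≤ ‖V‖) :
    h (C + 1) * ‖V‖ ≤ ⟪D (T₀ + V) - D T₀, V⟫ := by
  set g : ℝ → ℝ := fun s => ⟪D (T₀ + s • V), V⟫
  have hg := hasDerivAt_inner_apply_add_smul hD T₀ V
  have hVpos : 0 < ‖V‖ := one_pos.trans_le hV
  set s₀ := ‖V‖⁻¹
  have hs₀ : s₀ * ‖V‖ = 1 := inv_mul_cancel₀ hVpos.ne'
  have hg_mono : Monotone g := monotone_of_hasDerivAt_nonneg hg fun s =>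
    (mul_nonneg (hpos _ (norm_nonneg _)).le (sq_nonneg _)).trans (hmon _ V)
  -- On `[0, s₀]` the segment stays in the ball of radius `C + 1`.
  have hg_initial : h (C + 1) * ‖V‖ ^ 2 * (s₀ - 0) ≤ g s₀ - g 0 := by
    refine (convex_Icc 0 s₀).mul_sub_le_image_sub_of_le_deriv
      (fun s _ => (hg s).continuousAt.continuousWithinAt)
      (fun s _ => (hg s).differentiableAt.differentiableWithinAt) ?_ 0
      ⟨le_rfl, by positivity⟩ s₀ ⟨by positivity, le_rfl⟩ (by positivity)
    intro s hs
    rw [interior_Icc] at hs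
    have hseg : ‖T₀ + s • V‖ ≤ C + 1 := calc
      ‖T₀ + s • V‖ ≤ ‖T₀‖ + s * ‖V‖ := by
        simpa [norm_smul, Real.norm_of_nonneg hs.1.le] using norm_add_le T₀ (s • V)
      _ ≤ C + 1 := by nlinarith [hs.2]
    rw [(hg s).deriv]
    calc h (C + 1) * ‖V‖ ^ 2 ≤ h ‖T₀ + s • V‖ * ‖V‖ ^ 2 := by
          gcongr
          exact hanti (norm_nonneg _) ((norm_nonneg _).trans hseg) hseg
      _ ≤ _ := hmon _ V
  have hg_final : g s₀ ≤ g 1 := hg_mono (inv_le_one_of_one_le₀ hV)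
  have hg_ends : g 1 - g 0 = ⟪D (T₀ + V) - D T₀, V⟫ := by
    simp [g, inner_sub_left]
  have hK : h (C + 1) * ‖V‖ ^ 2 * (s₀ - 0) = h (C + 1) * ‖V‖ := by
    linear_combination (h (C + 1) * ‖V‖) * hs₀
  linarith

theorem abs_inner_sub_le_of_norm_le {D : E → E} {C₂ : ℝ} (hbdd : ∀ T : E, ‖D T‖ ≤ C₂)
    (x y T : E) : |⟪D x - D y, T⟫| ≤ 2 * C₂ * ‖T‖ := calc
  |⟪D x - D y, T⟫| ≤ ‖D x - D y‖ * ‖T‖ := abs_real_inner_le_norm _ _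
  _ ≤ 2 * C₂ * ‖T‖ := by
    gcongr
    linarith [norm_sub_le (D x) (D y), hbdd x, hbdd y]

theorem sub_div_le_inner_smul_sub {D : E → E} (hD : Differentiable ℝ D) {C₂ : ℝ}
    (hbdd : ∀ T : E, ‖D T‖ ≤ C₂) {h : ℝ → ℝ} (hpos : ∀ s : ℝ, 0 ≤ s → 0 < h s)
    (hanti : AntitoneOn h (Ici 0)) (hmon : UniformlyMonotoneWith h D) {C : ℝ} {T₀ T : E}
    (hT₀ : ‖T₀‖ ≤ C) (hT : ‖T‖ = 1) {t : ℝ} (ht : C + 1 ≤ t) :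
    h (C + 1) - (h (C + 1) * C + 2 * C₂ * C) / t ≤ ⟪D (t • T) - D T₀, T⟫ := by
  have hC : 0 ≤ C := (norm_nonneg _).trans hT₀
  have hC₂ : 0 ≤ C₂ := (norm_nonneg _).trans (hbdd 0)
  have ht₀ : 0 < t := by linarith
  have hK : 0 < h (C + 1) := hpos _ (by linarith)
  set X := D (t • T) - D T₀
  set V := t • T - T₀
  have htT : ‖t • T‖ = t := by rw [norm_smul, hT, mul_one, Real.norm_of_nonneg ht₀.le]
  have hV : t - C ≤ ‖V‖ := by linarith [norm_sub_norm_le (t • T) T₀]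
  have hXV : h (C + 1) * ‖V‖ ≤ ⟪X, V⟫ := by
    simpa [V] using mul_norm_le_inner_sub_of_uniformlyMonotoneWith hD hpos hanti hmon hT₀
      (show 1 ≤ ‖V‖ by linarith)
  have hXT₀ : -(2 * C₂ * C) ≤ ⟪X, T₀⟫ := by
    have h2C : 2 * C₂ * ‖T₀‖ ≤ 2 * C₂ * C := by gcongr
    linarith [(abs_le.mp (abs_inner_sub_le_of_norm_le hbdd (t • T) T₀ T₀)).1]
  have hsplit : t * ⟪X, T⟫ = ⟪X, V⟫ + ⟪X, T₀⟫ := by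
    rw [← real_inner_smul_right, ← inner_add_right, sub_add_cancel]
  have hKV : h (C + 1) * (t - C) ≤ h (C + 1) * ‖V‖ := mul_le_mul_of_nonneg_left hV hK.le
  rw [sub_le_iff_le_add, ← sub_le_iff_le_add', le_div_iff₀ ht₀]
  linarith

theorem le_liminf_of_eventually_sub_div_le {u : ℕ → ℝ} {a c : ℝ}
    (hu : IsBoundedUnder (· ≤ ·) atTop u) (hlow : ∀ᶠ n : ℕ in atTop, a - c / n ≤ u n) :
    a ≤ liminf u atTop := by
  have hlim : Tendsto (fun n : ℕ => a - c / n) atTop (𝓝 a) := by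
    simpa using tendsto_const_nhds.sub (tendsto_const_div_atTop_nhds_zero_nat c)
  rw [← hlim.liminf_eq]
  exact liminf_le_liminf hlow hlim.isBoundedUnder_ge hu.isCoboundedUnder_ge

theorem le_liminf_iInf_inner_smul_sub [Nontrivial E] {D : E → E} (hD : Differentiable ℝ D)
    {C₂ : ℝ} (hbdd : ∀ T : E, ‖D T‖ ≤ C₂) {h : ℝ → ℝ} (hpos : ∀ s : ℝ, 0 ≤ s → 0 < h s)
    (hanti : AntitoneOn h (Ici 0)) (hmon : UniformlyMonotoneWith h D) {C : ℝ} {T₀ : E}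
    (hT₀ : ‖T₀‖ ≤ C) :
    h (C + 1) ≤ liminf (fun n : ℕ =>
      ⨅ T : Metric.sphere (0 : E) 1, ⟪D ((n : ℝ) • (T : E)) - D T₀, T⟫) atTop := by
  have hunit : ∀ T : Metric.sphere (0 : E) 1, ‖(T : E)‖ = 1 := fun T => by simp
  have hbound : ∀ (n : ℕ) (T : Metric.sphere (0 : E) 1),
      |⟪D ((n : ℝ) • (T : E)) - D T₀, T⟫| ≤ 2 * C₂ := fun n T => by
    simpa [hunit T] using abs_inner_sub_le_of_norm_le hbdd ((n : ℝ) • (T : E)) T₀ T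
  have hne : Nonempty (Metric.sphere (0 : E) 1) := NormedSpace.sphere_nonempty_rclike ℝ zero_le_one
  refine le_liminf_of_eventually_sub_div_le (c := h (C + 1) * C + 2 * C₂ * C) ?_ ?_
  · refine ⟨2 * C₂, eventually_map.mpr (Eventually.of_forall fun n => ?_)⟩
    have hbdd_below : BddBelow (range fun T : Metric.sphere (0 : E) 1 =>
        ⟪D ((n : ℝ) • (T : E)) - D T₀, T⟫) :=
      ⟨-(2 * C₂), forall_mem_range.mpr fun T => (abs_le.mp (hbound n T)).1⟩
    let T₁ : Metric.sphere (0 : E) 1 := Classical.arbitrary _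
    exact (ciInf_le hbdd_below T₁).trans (abs_le.mp (hbound n T₁)).2
  · filter_upwards [eventually_ge_atTop ⌈C + 1⌉₊] with n hn
    exact le_ciInf fun T => sub_div_le_inner_smul_sub hD hbdd hpos hanti hmon hT₀ (hunit T)
      (Nat.ceil_le.mp hn)

end

theorem safety_condition_of_range_representation_general (d N : ℕ) (hd : 1 ≤ d) (hN : 1 ≤ N)
    (D : Mat d N → Mat d N) (hD : ContDiff ℝ 1 D)
    (C₂ : ℝ) (hbdd : ∀ T : Mat d N, ‖D T‖ ≤ C₂)
    (h : ℝ → ℝ)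
    (hpos : ∀ s : ℝ, 0 ≤ s → 0 < h s)
    (hanti : AntitoneOn h (Set.Ici 0))
    (hmon : ∀ T B : Mat d N, h ‖T‖ * ‖B‖ ^ 2 ≤ (inner ℝ (fderiv ℝ D T B) B : ℝ))
    (G : Mat d N) (C : ℝ) (T₀ : Mat d N) (hT₀ : ‖T₀‖ ≤ C) (hG : G = D T₀) :
    h (C + 1) ≤ Filter.liminf (fun n : ℕ =>
        ⨅ T : Metric.sphere (0 : Mat d N) 1,
          (inner ℝ (D ((n : ℝ) • (T : Mat d N)) - G) (T : Mat d N) : ℝ)) Filter.atTop ∧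
      0 < h (C + 1) := by
  have : Nonempty (Fin d × Fin N) := ⟨(⟨0, hd⟩, ⟨0, hN⟩)⟩
  subst hG
  exact ⟨le_liminf_iInf_inner_smul_sub (hD.differentiable one_ne_zero) hbdd hpos hanti hmon hT₀,
    hpos _ (by linarith [(norm_nonneg T₀).trans hT₀])⟩

/-- Let `D : ℝ^{d×N} → ℝ^{d×N}` be `C¹`, bounded by `C₂`, and uniformly `h`-monotone.
If `G = D(T₀)` with `|T₀| ≤ C`, then
`liminf_{n→∞} inf_{|T|=1} (D(nT) − G)·T ≥ h(C+1) > 0`. -/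
theorem safety_condition_of_range_representation (d N : ℕ) (hd : 1 ≤ d) (hN : 1 ≤ N)
    (D : Mat d N → Mat d N) (hD : ContDiff ℝ 1 D)
    (C₂ : ℝ) (hC₂ : 0 < C₂) (hbdd : ∀ T : Mat d N, ‖D T‖ ≤ C₂)
    (h : ℝ → ℝ)
    (hpos : ∀ s : ℝ, 0 ≤ s → 0 < h s)
    (hanti : AntitoneOn h (Set.Ici 0))
    (hcont : ContinuousOn h (Set.Ici 0))
    (hmon : ∀ T B : Mat d N, h ‖T‖ * ‖B‖ ^ 2 ≤ (inner ℝ (fderiv ℝ D T B) B : ℝ))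
    (G : Mat d N) (C : ℝ) (T₀ : Mat d N) (hT₀ : ‖T₀‖ ≤ C) (hG : G = D T₀) :
    h (C + 1) ≤ Filter.liminf (fun n : ℕ =>
        ⨅ T : Metric.sphere (0 : Mat d N) 1,
          (inner ℝ (D ((n : ℝ) • (T : Mat d N)) - G) (T : Mat d N) : ℝ)) Filter.atTop ∧
      0 < h (C + 1) :=
  safety_condition_of_range_representation_general d N hd hN D hD C₂ hbdd h hpos hanti hmon G C T₀
    hT₀ hG
end
end

section
/- Let Ω ⊂ ℝ^d be a bounded measurable set, let D : ℝ^{d×N} → ℝ^{d×N} be continuous with |D(T)| ≤ C₂ for all T, and let G₀ : Ω → ℝ^{d×N} be measurable and bounded. Suppose there exist C₁ > 0 and t_c > 0 such that for almost every x ∈ Ω, every unit matrix W ∈ ℝ^{d×N} (|W| = 1) and every t ≥ t_c one has (D(tW) − G₀(x)) · W ≥ C₁/2. Then there is a constant C, depending only on C₁, C₂, t_c, the Lebesgue measure of Ω and the sup norm of G₀, such that for every T ∈ L¹(Ω; ℝ^{d×N}): ∫_Ω [F(T(x)) − G₀(x)·T(x)] dx ≥ (C₁/2) ∫_Ω |T(x)|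 dx − C, where F(T) := ∫₀¹ D(tT)·T dt. -/
open MeasureTheory Filter Topology Set

noncomputable section

/-! Along the ray through a unit matrix `W`, `F(rW) − G·(rW) = ∫₀^r (D(uW) − G)·W du`. The
integrand is at least `−(C₂ + |G|)` everywhere and at least `C₁/2` once `u ≥ t_c`, so
`F(T) − G₀(x)·T ≥ (C₁/2)|T| − (C₁/2 + C₂ + M) t_c` for a.e. `x ∈ Ω` and every `T`. Since
`|F(T) − G₀·T| ≤ (C₂ + M)|T|`, the integrand is integrable for `T ∈ L¹`, and integrating the
pointwise bound over `Ω` gives the claim with `C = (C₁/2 + C₂ + M) t_c |Ω|`. -/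

lemma le_intervalIntegral_of_ge_of_ge_on_Ici {h : ℝ → ℝ} (hh : Continuous h) {A b s r : ℝ}
    (hs : 0 ≤ s) (hr : 0 ≤ r) (hAb : 0 ≤ b + A) (hA : ∀ u, -A ≤ h u)
    (hb : ∀ u, s ≤ u → b ≤ h u) :
    b * r - (b + A) * s ≤ ∫ u in (0 : ℝ)..r, h u := by
  have lower (u v c : ℝ) (huv : u ≤ v) (hc : ∀ w ∈ Icc u v, c ≤ h w) :
      (v - u) * c ≤ ∫ w in u..v, h w := by
    simpa using intervalIntegral.integral_mono_on huv (intervalIntegrable_const (μ := volume))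
      (hh.intervalIntegrable u v) hc
  rcases le_total r s with hrs | hsr
  · have := lower 0 r (-A) hr fun u _ => hA u
    nlinarith
  · rw [← intervalIntegral.integral_add_adjacent_intervals (hh.intervalIntegrable 0 s)
      (hh.intervalIntegrable s r)]
    have h₁ := lower 0 s (-A) hs fun u _ => hA u
    have h₂ := lower s r b hsr fun u hu => hb u hu.1
    linarith

section Potential

variable {d N : ℕ} {D : Mat d N → Mat d N}

lemma continuous_pot (hD : Continuous D) : Continuous (pot d N D) :=
  intervalIntegral.continuous_parametric_intervalIntegral_of_continuous'
    ((hD.comp (continuous_snd.smul continuous_fst)).inner continuous_fst) 0 1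

lemma abs_pot_le {C₂ : ℝ} (hbdd : ∀ T, ‖D T‖ ≤ C₂) (T : Mat d N) :
    |pot d N D T| ≤ C₂ * ‖T‖ := by
  have := intervalIntegral.norm_integral_le_of_norm_le_const (a := 0) (b := 1)
    (f := fun t : ℝ => (inner ℝ (D (t • T)) T : ℝ)) fun t _ =>
      (abs_real_inner_le_norm _ _).trans
        (mul_le_mul_of_nonneg_right (hbdd _) (norm_nonneg T))
  simpa [pot] using this

lemma pot_smul (W : Mat d N) (r : ℝ) :
    pot d N D (r • W) = ∫ u in (0 : ℝ)..r, (inner ℝ (D (u • W)) W : ℝ) := by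
  have := intervalIntegral.smul_integral_comp_mul_right
    (fun u : ℝ => (inner ℝ (D (u • W)) W : ℝ)) r (a := 0) (b := 1)
  simp only [zero_mul, one_mul, smul_eq_mul] at this
  rw [← this, pot, ← intervalIntegral.integral_const_mul]
  congr 1 with t
  rw [smul_smul, real_inner_smul_right, mul_comm t r]

lemma pot_smul_sub_inner_smul (hD : Continuous D) (G W : Mat d N) (r : ℝ) :
    pot d N D (r • W) - (inner ℝ G (r • W) : ℝ)
      = ∫ u in (0 : ℝ)..r, (inner ℝ (D (u • W) - G) W : ℝ) := by
  simp only [inner_sub_left]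
  rw [intervalIntegral.integral_sub
      (((hD.comp (continuous_id.smul continuous_const)).inner continuous_const).intervalIntegrable
        0 r) intervalIntegrable_const,
    pot_smul, intervalIntegral.integral_const, real_inner_smul_right, sub_zero, smul_eq_mul]

lemma mul_norm_sub_le_pot_sub_inner (hD : Continuous D) {C₂ M C₁ tc : ℝ}
    (hbdd : ∀ T, ‖D T‖ ≤ C₂) {G : Mat d N} (hG : ‖G‖ ≤ M) (hC₁ : 0 ≤ C₁) (htc : 0 ≤ tc)
    (hsafe : ∀ W : Mat d N, ‖W‖ = 1 → ∀ t : ℝ, tc ≤ t →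
      C₁ / 2 ≤ (inner ℝ (D (t • W) - G) W : ℝ))
    (T : Mat d N) :
    C₁ / 2 * ‖T‖ - (C₁ / 2 + C₂ + M) * tc ≤ pot d N D T - (inner ℝ G T : ℝ) := by
  have hA : 0 ≤ C₂ + M := add_nonneg ((norm_nonneg _).trans (hbdd 0)) ((norm_nonneg _).trans hG)
  by_cases hT : T = 0
  · subst hT
    simp only [pot, smul_zero, inner_zero_right, intervalIntegral.integral_zero, norm_zero]
    nlinarith
  set W := ‖T‖⁻¹ • T
  have hW : ‖W‖ = 1 := norm_smul_inv_norm hT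
  have hTW : T = ‖T‖ • W := by rw [smul_smul, mul_inv_cancel₀ (norm_ne_zero_iff.mpr hT), one_smul]
  rw [hTW, pot_smul_sub_inner_smul hD, ← hTW, add_assoc]
  refine le_intervalIntegral_of_ge_of_ge_on_Ici (A := C₂ + M) (by fun_prop) htc
    (norm_nonneg T) (by linarith) (fun u => ?_) (hsafe W hW)
  calc -(C₂ + M) ≤ -(‖D (u • W) - G‖ * ‖W‖) := by
        rw [hW, mul_one]
        linarith [norm_sub_le (D (u • W)) G, hbdd (u • W)]
    _ ≤ _ := neg_le_of_abs_le (abs_real_inner_le_norm _ _)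

lemma integrable_pot_sub_inner {α : Type*} [MeasurableSpace α] {μ : Measure α}
    (hD : Continuous D) {C₂ M : ℝ} (hbdd : ∀ T, ‖D T‖ ≤ C₂) {G T : α → Mat d N}
    (hG : AEStronglyMeasurable G μ) (hGM : ∀ᵐ x ∂μ, ‖G x‖ ≤ M) (hT : Integrable T μ) :
    Integrable (fun x => pot d N D (T x) - (inner ℝ (G x) (T x) : ℝ)) μ := by
  refine Integrable.sub ?_ ?_
  · exact (hT.norm.const_mul C₂).mono' ((continuous_pot hD).comp_aestronglyMeasurable
      hT.aestronglyMeasurable) (ae_of_all _ fun x => abs_pot_le hbdd (T x))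
  · refine (hT.norm.const_mul M).mono' (hG.inner hT.aestronglyMeasurable) ?_
    filter_upwards [hGM] with x hx
    exact (abs_real_inner_le_norm _ _).trans (mul_le_mul_of_nonneg_right hx (norm_nonneg _))

end Potential

theorem dual_functional_coercive_general (d N : ℕ)
    (Ω : Set (EuclideanSpace ℝ (Fin d)))
    (hΩmeas : MeasurableSet Ω) (hΩbdd : Bornology.IsBounded Ω)
    (D : Mat d N → Mat d N) (hD : Continuous D)
    (C₂ : ℝ) (hbdd : ∀ T : Mat d N, ‖D T‖ ≤ C₂)
    (G₀ : EuclideanSpace ℝ (Fin d) → Mat d N)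
    (hG₀meas : Measurable G₀) (M : ℝ) (hG₀bdd : ∀ x ∈ Ω, ‖G₀ x‖ ≤ M)
    (C₁ tc : ℝ) (hC₁ : 0 < C₁) (htc : 0 < tc)
    (hsafe : ∀ᵐ x ∂(volume.restrict Ω), ∀ W : Mat d N, ‖W‖ = 1 → ∀ t : ℝ, tc ≤ t →
      C₁ / 2 ≤ (inner ℝ (D (t • W) - G₀ x) W : ℝ)) :
    ∃ C : ℝ, ∀ T : EuclideanSpace ℝ (Fin d) → Mat d N,
      IntegrableOn T Ω volume →
        C₁ / 2 * (∫ x in Ω, ‖T x‖) - C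
          ≤ ∫ x in Ω, (pot d N D (T x) - (inner ℝ (G₀ x) (T x) : ℝ)) := by
  set K := (C₁ / 2 + C₂ + M) * tc
  refine ⟨K * volume.real Ω, fun T hT => ?_⟩
  have hG₀M : ∀ᵐ x ∂(volume.restrict Ω), ‖G₀ x‖ ≤ M := ae_restrict_of_forall_mem hΩmeas hG₀bdd
  have hconst : IntegrableOn (fun _ => K) Ω volume := integrableOn_const hΩbdd.measure_lt_top.ne
  calc C₁ / 2 * (∫ x in Ω, ‖T x‖) - K * volume.real Ω
      = ∫ x in Ω, (C₁ / 2 * ‖T x‖ - K) := by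
        rw [integral_sub (hT.norm.const_mul _) hconst, integral_const_mul, setIntegral_const,
          smul_eq_mul, mul_comm K]
    _ ≤ ∫ x in Ω, (pot d N D (T x) - (inner ℝ (G₀ x) (T x) : ℝ)) := by
        refine integral_mono_ae ((hT.norm.const_mul _).sub hconst)
          (integrable_pot_sub_inner hD hbdd hG₀meas.aestronglyMeasurable hG₀M hT) ?_
        filter_upwards [hsafe, hG₀M] with x hx hxM
        exact mul_norm_sub_le_pot_sub_inner hD hbdd hxM hC₁.le htc.le hx (T x)

/-- Coercivity of the dual functional: under the safety strain condition, the functional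
`T ↦ ∫_Ω (F(T) − G₀·T)` is bounded below by `(C₁/2)‖T‖_{L¹} − C` on `L¹(Ω; ℝ^{d×N})`. -/
theorem dual_functional_coercive (d N : ℕ) (hd : 1 ≤ d) (hN : 1 ≤ N)
    (Ω : Set (EuclideanSpace ℝ (Fin d)))
    (hΩmeas : MeasurableSet Ω) (hΩbdd : Bornology.IsBounded Ω)
    (D : Mat d N → Mat d N) (hD : Continuous D)
    (C₂ : ℝ) (hC₂ : 0 < C₂) (hbdd : ∀ T : Mat d N, ‖D T‖ ≤ C₂)
    (G₀ : EuclideanSpace ℝ (Fin d) → Mat d N)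
    (hG₀meas : Measurable G₀) (M : ℝ) (hG₀bdd : ∀ x ∈ Ω, ‖G₀ x‖ ≤ M)
    (C₁ tc : ℝ) (hC₁ : 0 < C₁) (htc : 0 < tc)
    (hsafe : ∀ᵐ x ∂(volume.restrict Ω), ∀ W : Mat d N, ‖W‖ = 1 → ∀ t : ℝ, tc ≤ t →
      C₁ / 2 ≤ (inner ℝ (D (t • W) - G₀ x) W : ℝ)) :
    ∃ C : ℝ, ∀ T : EuclideanSpace ℝ (Fin d) → Mat d N,
      IntegrableOn T Ω volume →
        C₁ / 2 * (∫ x in Ω, ‖T x‖) - C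
          ≤ ∫ x in Ω, (pot d N D (T x) - (inner ℝ (G₀ x) (T x) : ℝ)) :=
  dual_functional_coercive_general d N Ω hΩmeas hΩbdd D hD C₂ hbdd G₀ hG₀meas M hG₀bdd C₁ tc hC₁ htc
    hsafe
end
end

section
/- Let ε* be a C¹ mapping from the symmetric d×d real matrices to themselves with derivative tensor A, and assume: (i) ε*(T)·T ≥ C₁|T| − C₀ and |ε*(T)| ≤ C₂ for all symmetric T, with C₁, C₂ > 0, C₀ ≥ 0; (ii) there is a positive nonincreasing continuous h : [0,∞) → (0,∞) with h(|T|)|B|² ≤ (B,B)_{A(T)} ≤ C₂|B|²/(1+|T|) for all symmetric T, B; (iii) asymptotic Uhlenbeck structure: there is a continuous g : [0,∞) → [0,∞) with g(t) ≤ C₂(1+t) and |g(|T|) ε*(T) − T|² ≤ C₂ (1 + |T|³) h(|T|) for all symmetric T. Then the limit α := lim_{t→∞} t / g(t) exists and satisfies 0 < α < ∞. -/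
open MeasureTheory Filter Topology Set

noncomputable section

/-- The space of symmetric real `d × d` matrices, as a subspace of `ℝ^{d×d}` with the
Frobenius (Euclidean) inner product. -/
def SymMat (d : ℕ) : Submodule ℝ (EuclideanSpace ℝ (Fin d × Fin d)) where
  carrier := {T | ∀ i j : Fin d, T (i, j) = T (j, i)}
  add_mem' := by
    intro a b ha hb i j
    simp only [PiLp.add_apply, ha i j, hb i j]
  zero_mem' := by intro i j; rfl
  smul_mem' := by
    intro c a ha i j
    simp only [PiLp.smul_apply, ha i j]

/-!
Restrict `ε*` to the ray through a unit matrix `E`: the scalar function `φ t = ε*(t E) · E` has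
derivative `(E, E)_{A(t E)} ≥ h |t| > 0` and is bounded by `C₂`, so it increases to a limit `L`,
and coercivity gives `L ≥ C₁ > 0`. Since `h` is nonincreasing, the mean value theorem on
`[t/2, t]` gives `t h(t) ≤ 2 (φ t - φ (t/2)) → 0`. Testing the Uhlenbeck bound against `E` gives
`(g(t) φ(t) - t)² ≤ C₂ (1 + t³) h(t) = o(t²)`, hence `g(t) φ(t) / t → 1` and `t / g(t) → L`.
-/

open scoped InnerProductSpace

lemma SymMat.nontrivial {d : ℕ} (hd : 0 < d) : Nontrivial (SymMat d) := by
  let i : Fin d := ⟨0, hd⟩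
  have hsym : EuclideanSpace.single (i, i) (1 : ℝ) ∈ SymMat d := by
    intro j k
    by_cases hj : j = i <;> by_cases hk : k = i <;> simp [PiLp.single_apply, hj, hk]
  refine ⟨⟨⟨_, hsym⟩, 0, fun h0 => ?_⟩⟩
  simpa using congrArg (fun T : SymMat d => (T : EuclideanSpace ℝ (Fin d × Fin d)) (i, i)) h0

section Ray

variable {F : Type*} [NormedAddCommGroup F] [InnerProductSpace ℝ F]

def rayComponent (ε : F → F) (e : F) (t : ℝ) : ℝ := ⟪ε (t • e), e⟫_ℝ

variable {ε : F → F} {e : F}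

lemma hasDerivAt_rayComponent {t : ℝ} (hε : DifferentiableAt ℝ ε (t • e)) :
    HasDerivAt (rayComponent ε e) ⟪fderiv ℝ ε (t • e) e, e⟫_ℝ t := by
  have hray : HasDerivAt (fun s : ℝ => s • e) e t := by
    simpa using (hasDerivAt_id t).smul_const e
  unfold rayComponent
  simpa only [Function.comp_apply, inner_zero_right, zero_add] using
    (hε.hasFDerivAt.comp_hasDerivAt t hray).inner (𝕜 := ℝ) (hasDerivAt_const t e)

lemma rayComponent_le {C : ℝ} (hbdd : ∀ x, ‖ε x‖ ≤ C) (he : ‖e‖ = 1) (t : ℝ) :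
    rayComponent ε e t ≤ C :=
  calc rayComponent ε e t ≤ ‖ε (t • e)‖ * ‖e‖ := real_inner_le_norm _ _
    _ ≤ C := by rw [he, mul_one]; exact hbdd _

lemma sub_div_le_rayComponent {C₀ C₁ : ℝ} (hcoer : ∀ x, C₁ * ‖x‖ - C₀ ≤ ⟪ε x, x⟫_ℝ)
    (he : ‖e‖ = 1) {t : ℝ} (ht : 0 < t) : C₁ - C₀ / t ≤ rayComponent ε e t := by
  have key := hcoer (t • e)
  rw [norm_smul, he, Real.norm_of_nonneg ht.le, mul_one, real_inner_smul_right] at key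
  rw [sub_le_comm, le_div_iff₀ ht, sub_mul]
  unfold rayComponent
  linarith

lemma sq_mul_rayComponent_sub_le (he : ‖e‖ = 1) (c t : ℝ) :
    (c * rayComponent ε e t - t) ^ 2 ≤ ‖c • ε (t • e) - t • e‖ ^ 2 := by
  have hcomp : c * rayComponent ε e t - t = ⟪c • ε (t • e) - t • e, e⟫_ℝ := by
    rw [inner_sub_left, real_inner_smul_left, real_inner_smul_left, real_inner_self_eq_norm_sq,
      he, rayComponent]
    ring
  rw [hcomp, ← sq_abs]
  gcongr
  simpa [he] using abs_real_inner_le_norm (c • ε (t • e) - t • e) e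

end Ray

section Scalar

variable {φ h g : ℝ → ℝ} {L : ℝ}

lemma mul_sub_le_sub_of_le_deriv (hφ : Differentiable ℝ φ) (hanti : AntitoneOn h (Set.Ici 0))
    (hderiv : ∀ t, 0 ≤ t → h t ≤ deriv φ t) {a b : ℝ} (ha : 0 ≤ a) (hab : a ≤ b) :
    h b * (b - a) ≤ φ b - φ a := by
  refine (convex_Icc a b).mul_sub_le_image_sub_of_le_deriv hφ.continuous.continuousOn
    hφ.differentiableOn (fun s hs => ?_) a (Set.left_mem_Icc.2 hab) b (Set.right_mem_Icc.2 hab) hab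
  rw [interior_Icc] at hs
  have hs0 : 0 ≤ s := ha.trans hs.1.le
  exact (hanti hs0 (hs0.trans hs.2.le) hs.2.le).trans (hderiv s hs0)

lemma tendsto_mul_atTop_zero_of_le_deriv (hφ : Differentiable ℝ φ)
    (hlim : Tendsto φ atTop (𝓝 L)) (hpos : ∀ t, 0 ≤ t → 0 ≤ h t)
    (hanti : AntitoneOn h (Set.Ici 0)) (hderiv : ∀ t, 0 ≤ t → h t ≤ deriv φ t) :
    Tendsto (fun t => t * h t) atTop (𝓝 0) := by
  have hhalf : Tendsto (fun t => 2 * (φ t - φ (t / 2))) atTop (𝓝 0) := by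
    simpa using (hlim.sub (hlim.comp (tendsto_id.atTop_div_const two_pos))).const_mul 2
  refine squeeze_zero' ?_ ?_ hhalf
  · filter_upwards [eventually_ge_atTop 0] with t ht using mul_nonneg ht (hpos t ht)
  · filter_upwards [eventually_ge_atTop 0] with t ht
    have := mul_sub_le_sub_of_le_deriv hφ hanti hderiv (by positivity) (half_le_self ht)
    linarith

lemma tendsto_div_atTop_zero_of_sq_le {r : ℝ → ℝ} {C : ℝ}
    (hsq : ∀ t, 0 ≤ t → r t ^ 2 ≤ C * (1 + t ^ 3) * h t)
    (hh : Tendsto (fun t => t * h t) atTop (𝓝 0)) :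
    Tendsto (fun t => r t / t) atTop (𝓝 0) := by
  have hbound : Tendsto (fun t => √(C * (t * h t * (t ^ 3)⁻¹ + t * h t))) atTop (𝓝 0) := by
    have hcube : Tendsto (fun t : ℝ => (t ^ 3)⁻¹) atTop (𝓝 0) :=
      (tendsto_pow_atTop three_ne_zero).inv_tendsto_atTop
    simpa using ((hh.mul hcube).add hh).const_mul C |>.sqrt
  refine squeeze_zero_norm' ?_ hbound
  filter_upwards [eventually_gt_atTop 0] with t ht
  rw [Real.norm_eq_abs]
  refine Real.abs_le_sqrt ?_
  calc (r t / t) ^ 2 = r t ^ 2 / t ^ 2 := div_pow _ _ _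
    _ ≤ C * (1 + t ^ 3) * h t / t ^ 2 := by gcongr; exact hsq t ht.le
    _ = C * (t * h t * (t ^ 3)⁻¹ + t * h t) := by field_simp

lemma tendsto_div_of_tendsto_sub_div (hlim : Tendsto φ atTop (𝓝 L)) (hL : L ≠ 0)
    (hr : Tendsto (fun t => (g t * φ t - t) / t) atTop (𝓝 0)) :
    Tendsto (fun t => t / g t) atTop (𝓝 L) := by
  have hquot : Tendsto (fun t => φ t / (1 + (g t * φ t - t) / t)) atTop (𝓝 L) := by
    simpa [Pi.div_def] using hlim.div (tendsto_const_nhds.add hr) (by norm_num : (1 : ℝ) + 0 ≠ 0)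
  refine hquot.congr' ?_
  filter_upwards [hlim.eventually_ne hL, eventually_gt_atTop 0] with t hφ ht
  rcases eq_or_ne (g t) 0 with hg | hg
  · -- both sides are junk values `_ / 0 = 0`
    simp [hg, ht.ne']
  · field_simp
    ring

end Scalar

theorem uhlenbeck_limit_exists_general (d : ℕ) (hd : 2 ≤ d)
    (ε : SymMat d → SymMat d) (hε : ContDiff ℝ 1 ε)
    (C₀ C₁ C₂ : ℝ) (hC₁ : 0 < C₁)
    (hcoer : ∀ T : SymMat d, C₁ * ‖T‖ - C₀ ≤ (inner ℝ (ε T) T : ℝ))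
    (hbdd : ∀ T : SymMat d, ‖ε T‖ ≤ C₂)
    (h : ℝ → ℝ)
    (hpos : ∀ s : ℝ, 0 ≤ s → 0 < h s)
    (hanti : AntitoneOn h (Set.Ici 0))
    (hmon : ∀ T B : SymMat d, h ‖T‖ * ‖B‖ ^ 2 ≤ (inner ℝ (fderiv ℝ ε T B) B : ℝ))
    (g : ℝ → ℝ)
    (huhl : ∀ T : SymMat d, ‖g ‖T‖ • ε T - T‖ ^ 2 ≤ C₂ * (1 + ‖T‖ ^ 3) * h ‖T‖) :
    ∃ α : ℝ, 0 < α ∧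
      Filter.Tendsto (fun t : ℝ => t / g t) Filter.atTop (nhds α) := by
  have := SymMat.nontrivial (by omega : 0 < d)
  obtain ⟨E, hE⟩ := exists_norm_eq (SymMat d) zero_le_one
  set φ := rayComponent ε E
  have hnorm (t : ℝ) : ‖t • E‖ = |t| := by rw [norm_smul, hE, Real.norm_eq_abs, mul_one]
  have hφderiv (t : ℝ) := hasDerivAt_rayComponent (e := E) ((hε.differentiable one_ne_zero) (t • E))
  have hφdiff : Differentiable ℝ φ := fun t => (hφderiv t).differentiableAt
  have hderiv (t : ℝ) : h |t| ≤ deriv φ t := by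
    have := hmon (t • E) E
    rwa [hnorm, hE, one_pow, mul_one, ← (hφderiv t).deriv] at this
  have hmono : Monotone φ :=
    monotone_of_deriv_nonneg hφdiff fun t => (hpos _ (abs_nonneg t)).le.trans (hderiv t)
  have hlim := tendsto_atTop_ciSup hmono ⟨C₂, forall_mem_range.2 (rayComponent_le hbdd hE)⟩
  set L := ⨆ t, φ t
  have hL : 0 < L := by
    refine hC₁.trans_le (le_of_tendsto_of_tendsto (f := fun t => C₁ - C₀ / t) ?_ hlim ?_)
    · simpa using (tendsto_const_nhds (x := C₁)).sub
        ((tendsto_const_nhds (x := C₀)).div_atTop tendsto_id)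
    · exact (eventually_gt_atTop 0).mono fun t ht => sub_div_le_rayComponent hcoer hE ht
  have hderiv₀ (t : ℝ) (ht : 0 ≤ t) : h t ≤ deriv φ t := by
    simpa only [abs_of_nonneg ht] using hderiv t
  have hth := tendsto_mul_atTop_zero_of_le_deriv hφdiff hlim (fun t ht => (hpos t ht).le)
    hanti hderiv₀
  have hr := tendsto_div_atTop_zero_of_sq_le (r := fun t => g t * φ t - t) (C := C₂)
    (fun t ht => by
      have := huhl (t • E)
      rw [hnorm, abs_of_nonneg ht] at this
      exact (sq_mul_rayComponent_sub_le hE (g t) t).trans this) hth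
  exact ⟨L, hL, tendsto_div_of_tendsto_sub_div hlim hL.ne' hr⟩

/-- Let `ε*` be a `C¹` mapping of the symmetric `d × d` matrices satisfying the
coercivity and boundedness conditions, uniform `h`-monotonicity with the upper bound
`(B,B)_{A(T)} ≤ C₂|B|²/(1+|T|)`, and the asymptotic Uhlenbeck structure with `g`.
Then `α := lim_{t→∞} t/g(t)` exists and `0 < α < ∞`. -/
theorem uhlenbeck_limit_exists (d : ℕ) (hd : 2 ≤ d)
    (ε : SymMat d → SymMat d) (hε : ContDiff ℝ 1 ε)
    (C₀ C₁ C₂ : ℝ) (hC₀ : 0 ≤ C₀) (hC₁ : 0 < C₁) (hC₂ : 0 < C₂)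
    (hcoer : ∀ T : SymMat d, C₁ * ‖T‖ - C₀ ≤ (inner ℝ (ε T) T : ℝ))
    (hbdd : ∀ T : SymMat d, ‖ε T‖ ≤ C₂)
    (h : ℝ → ℝ)
    (hpos : ∀ s : ℝ, 0 ≤ s → 0 < h s)
    (hanti : AntitoneOn h (Set.Ici 0))
    (hcont : ContinuousOn h (Set.Ici 0))
    (hmon : ∀ T B : SymMat d, h ‖T‖ * ‖B‖ ^ 2 ≤ (inner ℝ (fderiv ℝ ε T B) B : ℝ))
    (hupper : ∀ T B : SymMat d,
      (inner ℝ (fderiv ℝ ε T B) B : ℝ) ≤ C₂ * ‖B‖ ^ 2 / (1 + ‖T‖))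
    (g : ℝ → ℝ)
    (hgcont : ContinuousOn g (Set.Ici 0))
    (hgnonneg : ∀ t : ℝ, 0 ≤ t → 0 ≤ g t)
    (hggrowth : ∀ t : ℝ, 0 ≤ t → g t ≤ C₂ * (1 + t))
    (huhl : ∀ T : SymMat d, ‖g ‖T‖ • ε T - T‖ ^ 2 ≤ C₂ * (1 + ‖T‖ ^ 3) * h ‖T‖) :
    ∃ α : ℝ, 0 < α ∧
      Filter.Tendsto (fun t : ℝ => t / g t) Filter.atTop (nhds α) :=
  uhlenbeck_limit_exists_general d hd ε hε C₀ C₁ C₂ hC₁ hcoer hbdd h hpos hanti hmon g huhl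
end
end

section
/- Let D : ℝ^{d×N} → ℝ^{d×N} be C¹ with symmetric derivative tensor A, uniformly h-monotone, and satisfying D(T)·T ≥ C₁|T| − C₀ and |D(T)| ≤ C₂ for all T (with C₁, C₂ > 0, C₀ ≥ 0), and let F(T) := ∫₀¹ D(tT)·T dt. Then for every T ∈ ℝ^{d×N} the recession limit F_∞(T) := lim_{n→∞} F(nT)/n exists and is finite; the function F_∞ is convex, positively 1-homogeneous (F_∞(λT) = λ F_∞(T) for all λ ≥ 0 and all T), and satisfies F_∞(T) ≥ C₁ |T| for all T; in particular F_∞ is strictly positive on ℝ^{d×N} \\ {0}. -/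
open MeasureTheory Filter Topology Set

noncomputable section

/-!
Positive semidefiniteness of `A = D'` makes `D` a monotone operator, so `s ↦ D(sT)·T` is
nondecreasing; being bounded by `C₂|T|`, it converges as `s → ∞`. Monotonicity tested against
`sT - W` shows that the limit is `sup_W D(W)·T`, the support function of the (bounded) range of
`D`, which is convex and positively homogeneous as a supremum of linear functions. Finally
`F(sT)/s = ∫₀¹ D(tsT)·T dt` is an average of the ray function and has the same limit by
dominated convergence.
-/

open scoped RealInnerProductSpace

section SupportFunction

variable {ι E : Type*} [NormedAddCommGroup E] [InnerProductSpace ℝ E] {u : ι → E} {C : ℝ}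

def supportFun (u : ι → E) (T : E) : ℝ := ⨆ i, ⟪u i, T⟫

theorem bddAbove_range_inner (hu : ∀ i, ‖u i‖ ≤ C) (T : E) :
    BddAbove (range fun i => ⟪u i, T⟫) := by
  refine ⟨C * ‖T‖, ?_⟩
  rintro _ ⟨i, rfl⟩
  exact (real_inner_le_norm _ _).trans (mul_le_mul_of_nonneg_right (hu i) (norm_nonneg T))

theorem inner_le_supportFun (hu : ∀ i, ‖u i‖ ≤ C) (i : ι) (T : E) :
    ⟪u i, T⟫ ≤ supportFun u T :=
  le_ciSup (bddAbove_range_inner hu T) i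

theorem supportFun_smul {l : ℝ} (hl : 0 ≤ l) (T : E) :
    supportFun u (l • T) = l * supportFun u T := by
  simp only [supportFun, real_inner_smul_right, Real.mul_iSup_of_nonneg hl]

theorem convexOn_supportFun [Nonempty ι] (hu : ∀ i, ‖u i‖ ≤ C) :
    ConvexOn ℝ univ (supportFun u) := by
  refine ⟨convex_univ, fun X _ Y _ a b ha hb _ => ciSup_le fun i => ?_⟩
  rw [inner_add_right, real_inner_smul_right, real_inner_smul_right, smul_eq_mul, smul_eq_mul]
  gcongr
  · exact inner_le_supportFun hu i X
  · exact inner_le_supportFun hu i Y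

end SupportFunction

theorem tendsto_integral_comp_mul_atTop {G : Type*} [NormedAddCommGroup G] [NormedSpace ℝ G]
    [CompleteSpace G] {f : ℝ → G} {L : G} {M : ℝ} (hf : Continuous f) (hM : ∀ s, ‖f s‖ ≤ M)
    (hL : Tendsto f atTop (𝓝 L)) :
    Tendsto (fun s => ∫ t in (0 : ℝ)..1, f (t * s)) atTop (𝓝 L) := by
  have hlim := intervalIntegral.tendsto_integral_filter_of_dominated_convergence
    (μ := volume) (a := 0) (b := 1) (l := atTop) (F := fun s t => f (t * s)) (f := fun _ => L)
    (fun _ => M)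
    (Eventually.of_forall fun _ =>
      (hf.comp (continuous_id.mul continuous_const)).aestronglyMeasurable)
    (Eventually.of_forall fun _ => Eventually.of_forall fun _ _ => hM _)
    intervalIntegrable_const
    (Eventually.of_forall fun t ht => by
      have ht0 : 0 < t := by simpa using ht.1
      exact hL.comp (tendsto_id.const_mul_atTop ht0))
  simpa using hlim

section MonotoneOperator

variable {E : Type*} [NormedAddCommGroup E] [InnerProductSpace ℝ E] {D : E → E}

theorem inner_sub_sub_nonneg_of_inner_fderiv_nonneg (hD : Differentiable ℝ D)
    (hD' : ∀ T B, 0 ≤ ⟪fderiv ℝ D T B, B⟫) (X Y : E) : 0 ≤ ⟪D X - D Y, X - Y⟫ := by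
  set V := X - Y
  have hderiv : ∀ t : ℝ, HasDerivAt (fun t : ℝ => ⟪D (Y + t • V), V⟫)
      ⟪fderiv ℝ D (Y + t • V) V, V⟫ t := by
    intro t
    have hline : HasDerivAt (fun t : ℝ => Y + t • V) V t := by
      simpa using ((hasDerivAt_id t).smul_const V).const_add Y
    simpa using ((hD _).hasFDerivAt.comp_hasDerivAt t hline).inner ℝ (hasDerivAt_const t V)
  have hmono : Monotone fun t : ℝ => ⟪D (Y + t • V), V⟫ :=
    monotone_of_deriv_nonneg (fun t => (hderiv t).differentiableAt)
      fun t => (hderiv t).deriv ▸ hD' _ _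
  have := hmono zero_le_one
  simp only [zero_smul, add_zero, one_smul, V, add_sub_cancel] at this
  rw [inner_sub_left]
  linarith

theorem monotone_inner_apply_smul (hmono : ∀ X Y, 0 ≤ ⟪D X - D Y, X - Y⟫) (T : E) :
    Monotone fun s : ℝ => ⟪D (s • T), T⟫ := by
  intro s r hsr
  have h := hmono (r • T) (s • T)
  rw [← sub_smul, real_inner_smul_right, inner_sub_left] at h
  rcases hsr.eq_or_lt with rfl | hlt
  · exact le_rfl
  · linarith [nonneg_of_mul_nonneg_right h (sub_pos.2 hlt)]

theorem inner_apply_le_inner_apply_smul_add (hmono : ∀ X Y, 0 ≤ ⟪D X - D Y, X - Y⟫) {C : ℝ}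
    (hC : ∀ T, ‖D T‖ ≤ C) (W T : E) {s : ℝ} (hs : 0 < s) :
    ⟪D W, T⟫ ≤ ⟪D (s • T), T⟫ + 2 * C * ‖W‖ / s := by
  have h := hmono (s • T) W
  rw [inner_sub_right, real_inner_smul_right, inner_sub_left] at h
  have hW : |⟪D (s • T) - D W, W⟫| ≤ 2 * C * ‖W‖ :=
    calc |⟪D (s • T) - D W, W⟫| ≤ ‖D (s • T) - D W‖ * ‖W‖ := abs_real_inner_le_norm _ _
      _ ≤ (C + C) * ‖W‖ := by gcongr; exact (norm_sub_le _ _).trans (add_le_add (hC _) (hC _))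
      _ = 2 * C * ‖W‖ := by ring
  rw [← sub_le_iff_le_add', le_div_iff₀ hs]
  linarith [neg_abs_le ⟪D (s • T) - D W, W⟫]

theorem tendsto_inner_apply_smul_supportFun (hmono : ∀ X Y, 0 ≤ ⟪D X - D Y, X - Y⟫) {C : ℝ}
    (hC : ∀ T, ‖D T‖ ≤ C) (T : E) :
    Tendsto (fun s : ℝ => ⟪D (s • T), T⟫) atTop (𝓝 (supportFun D T)) := by
  have hbdd : BddAbove (range fun s : ℝ => ⟪D (s • T), T⟫) :=
    (bddAbove_range_inner hC T).mono (range_subset_iff.2 fun s => mem_range_self (s • T))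
  have hray := tendsto_atTop_ciSup (monotone_inner_apply_smul hmono T) hbdd
  suffices supportFun D T ≤ ⨆ s : ℝ, ⟪D (s • T), T⟫ by
    rwa [le_antisymm (ciSup_le fun s => inner_le_supportFun hC _ T) this] at hray
  refine ciSup_le fun W => ?_
  have hlim : Tendsto (fun s => ⟪D (s • T), T⟫ + 2 * C * ‖W‖ / s) atTop
      (𝓝 (⨆ s : ℝ, ⟪D (s • T), T⟫)) := by
    simpa using hray.add (tendsto_const_nhds.div_atTop tendsto_id)
  exact ge_of_tendsto hlim ((eventually_gt_atTop 0).mono fun s hs =>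
    inner_apply_le_inner_apply_smul_add hmono hC W T hs)

theorem mul_norm_le_supportFun {C C₀ C₁ : ℝ} (hC : ∀ T, ‖D T‖ ≤ C)
    (hcoer : ∀ T, C₁ * ‖T‖ - C₀ ≤ ⟪D T, T⟫) (T : E) : C₁ * ‖T‖ ≤ supportFun D T := by
  have hlim : Tendsto (fun s => C₁ * ‖T‖ - C₀ / s) atTop (𝓝 (C₁ * ‖T‖)) := by
    simpa using tendsto_const_nhds.sub (tendsto_const_nhds.div_atTop (tendsto_id (α := ℝ)))
  refine le_of_tendsto hlim ((eventually_gt_atTop 0).mono fun s hs => ?_)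
  have h := hcoer (s • T)
  rw [norm_smul, Real.norm_of_nonneg hs.le, real_inner_smul_right] at h
  calc C₁ * ‖T‖ - C₀ / s ≤ ⟪D (s • T), T⟫ := by
        rw [sub_le_iff_le_add, ← sub_le_iff_le_add', le_div_iff₀ hs]; linarith
    _ ≤ supportFun D T := inner_le_supportFun hC _ T

end MonotoneOperator

theorem pot_smul_div {d N : ℕ} (D : Mat d N → Mat d N) (T : Mat d N) {s : ℝ} (hs : s ≠ 0) :
    pot d N D (s • T) / s = ∫ t in (0 : ℝ)..1, ⟪D ((t * s) • T), T⟫ := by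
  simp only [pot, smul_smul, real_inner_smul_right, intervalIntegral.integral_const_mul]
  field_simp

theorem recession_function_exists_general (d N : ℕ)
    (D : Mat d N → Mat d N) (hD : ContDiff ℝ 1 D)
    (h : ℝ → ℝ)
    (hpos : ∀ s : ℝ, 0 ≤ s → 0 < h s)
    (hmon : ∀ T B : Mat d N, h ‖T‖ * ‖B‖ ^ 2 ≤ (inner ℝ (fderiv ℝ D T B) B : ℝ))
    (C₀ C₁ C₂ : ℝ) (hC₁ : 0 < C₁)
    (hcoer : ∀ T : Mat d N, C₁ * ‖T‖ - C₀ ≤ (inner ℝ (D T) T : ℝ))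
    (hbdd : ∀ T : Mat d N, ‖D T‖ ≤ C₂) :
    ∃ Finf : Mat d N → ℝ,
      (∀ T : Mat d N, Filter.Tendsto
        (fun n : ℕ => pot d N D ((n : ℝ) • T) / (n : ℝ)) Filter.atTop (nhds (Finf T))) ∧
      ConvexOn ℝ Set.univ Finf ∧
      (∀ l : ℝ, 0 ≤ l → ∀ T : Mat d N, Finf (l • T) = l * Finf T) ∧
      (∀ T : Mat d N, C₁ * ‖T‖ ≤ Finf T) ∧
      (∀ T : Mat d N, T ≠ 0 → 0 < Finf T) := by
  have hmono : ∀ X Y : Mat d N, 0 ≤ ⟪D X - D Y, X - Y⟫ :=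
    inner_sub_sub_nonneg_of_inner_fderiv_nonneg (hD.differentiable one_ne_zero) fun T B =>
      (mul_nonneg (hpos _ (norm_nonneg T)).le (sq_nonneg ‖B‖)).trans (hmon T B)
  have hlower := mul_norm_le_supportFun hbdd hcoer
  refine ⟨supportFun D, fun T => ?_, convexOn_supportFun hbdd, fun l hl T => supportFun_smul hl T,
    hlower, fun T hT => (mul_pos hC₁ (norm_pos_iff.2 hT)).trans_le (hlower T)⟩
  have hray_cont : Continuous fun s : ℝ => ⟪D (s • T), T⟫ :=
    (hD.continuous.comp (continuous_id.smul continuous_const)).inner continuous_const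
  have hray_bdd : ∀ s : ℝ, ‖⟪D (s • T), T⟫‖ ≤ C₂ * ‖T‖ := fun s =>
    (norm_inner_le_norm _ _).trans (mul_le_mul_of_nonneg_right (hbdd _) (norm_nonneg T))
  have hlim := (tendsto_integral_comp_mul_atTop hray_cont hray_bdd
    (tendsto_inner_apply_smul_supportFun hmono hbdd T)).comp tendsto_natCast_atTop_atTop
  refine hlim.congr' ((eventually_ne_atTop 0).mono fun n hn => ?_)
  exact (pot_smul_div D T (Nat.cast_ne_zero.2 hn)).symm

/-- Under the standing assumptions on `D`, the recession function
`F_∞(T) := lim_{n→∞} F(nT)/n` of the potential `F` exists and is finite everywhere, is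
convex, positively `1`-homogeneous, and satisfies `F_∞(T) ≥ C₁|T|`; in particular `F_∞`
is strictly positive away from `0`. -/
theorem recession_function_exists (d N : ℕ) (hd : 1 ≤ d) (hN : 1 ≤ N)
    (D : Mat d N → Mat d N) (hD : ContDiff ℝ 1 D)
    (hsymm : ∀ T B C : Mat d N,
      (inner ℝ (fderiv ℝ D T B) C : ℝ) = (inner ℝ (fderiv ℝ D T C) B : ℝ))
    (h : ℝ → ℝ)
    (hpos : ∀ s : ℝ, 0 ≤ s → 0 < h s)
    (hanti : AntitoneOn h (Set.Ici 0))
    (hcont : ContinuousOn h (Set.Ici 0))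
    (hmon : ∀ T B : Mat d N, h ‖T‖ * ‖B‖ ^ 2 ≤ (inner ℝ (fderiv ℝ D T B) B : ℝ))
    (C₀ C₁ C₂ : ℝ) (hC₀ : 0 ≤ C₀) (hC₁ : 0 < C₁) (hC₂ : 0 < C₂)
    (hcoer : ∀ T : Mat d N, C₁ * ‖T‖ - C₀ ≤ (inner ℝ (D T) T : ℝ))
    (hbdd : ∀ T : Mat d N, ‖D T‖ ≤ C₂) :
    ∃ Finf : Mat d N → ℝ,
      (∀ T : Mat d N, Filter.Tendsto
        (fun n : ℕ => pot d N D ((n : ℝ) • T) / (n : ℝ)) Filter.atTop (nhds (Finf T))) ∧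
      ConvexOn ℝ Set.univ Finf ∧
      (∀ l : ℝ, 0 ≤ l → ∀ T : Mat d N, Finf (l • T) = l * Finf T) ∧
      (∀ T : Mat d N, C₁ * ‖T‖ ≤ Finf T) ∧
      (∀ T : Mat d N, T ≠ 0 → 0 < Finf T) :=
  recession_function_exists_general d N D hD h hpos hmon C₀ C₁ C₂ hC₁ hcoer hbdd
end
end
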